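/- arXiv:math/9310214 — 8 statements merged into one kernel-verified Lean document; each statement's English description precedes it below -/
import Mathlib

section
/- Let $X_1, X_2, \dots$ be independent identically distributed random variables with values in a Banach space, and set $S_k = \sum_{i=1}^k X_i$. Then for all integers $1 \le j \le k$ and all $t > 0$, $\Pr(\|S_j\| > t) \le 3\, \Pr(\|S_k\| > t/10)$. -/
/-!
Put `s = t / 10`. If `P(‖S_k‖ > s) ≥ 1/3` there is nothing to prove, so assume that `S_k` lies
in the closed ball of radius `s` about `0` with probability `> 2/3`. Since `S_k = S_m + (S_k - S_m)`
with independent summands, averaging over the second one yields for every `m ≤ k` a point `x m`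
with `P(‖S_m - x m‖ ≤ s) > 2/3`. Three events of probability `> 2/3` meet, and `S_{a+b} - S_a`
has the law of `S_b`, so `‖x a + x b - x (a + b)‖ ≤ 3 s`; together with `‖x k‖ ≤ 2 s` this
forces `‖x m‖ ≤ 8 s` for all `m ≤ k`. Hence `‖S_k - S_j‖ ≤ 9 s` with probability `> 2/3`,
independently of `S_j`, and on the intersection with `{‖S_j‖ > 10 s}` we have `‖S_k‖ > s`.
-/

open MeasureTheory ProbabilityTheory Finset Metric

section AddMonoid

variable {Ω E : Type*} [MeasurableSpace Ω] {P : Measure Ω}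
  [AddMonoid E] [MeasurableSpace E] [MeasurableAdd₂ E]

lemma ProbabilityTheory.IdentDistrib.add_of_indepFun [IsFiniteMeasure P] {X Y X' Y' : Ω → E}
    (hX : IdentDistrib X X' P P) (hY : IdentDistrib Y Y' P P)
    (hXY : IndepFun X Y P) (hXY' : IndepFun X' Y' P) :
    IdentDistrib (X + Y) (X' + Y') P P where
  aemeasurable_fst := hX.aemeasurable_fst.add hY.aemeasurable_fst
  aemeasurable_snd := hX.aemeasurable_snd.add hY.aemeasurable_snd
  map_eq := by
    rw [hXY.map_add_eq_map_conv_map₀ hX.aemeasurable_fst hY.aemeasurable_fst,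
      hXY'.map_add_eq_map_conv_map₀ hX.aemeasurable_snd hY.aemeasurable_snd, hX.map_eq, hY.map_eq]

lemma ProbabilityTheory.IndepFun.measureReal_add_preimage_le [IsProbabilityMeasure P]
    {X Y : Ω → E} (hXY : IndepFun X Y P) (hX : AEMeasurable X P) (hY : AEMeasurable Y P)
    {B : Set E} (hB : MeasurableSet B) {c : ℝ}
    (hc : ∀ y, P.real (X ⁻¹' ((· + y) ⁻¹' B)) ≤ c) :
    P.real ((X + Y) ⁻¹' B) ≤ c := by
  have hc₀ : 0 ≤ c := measureReal_nonneg.trans (hc 0)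
  have hslice (y : E) : (P.map X) ((· + y) ⁻¹' B) ≤ ENNReal.ofReal c := by
    rw [Measure.map_apply_of_aemeasurable hX (measurable_add_const y hB)]
    exact (ENNReal.le_ofReal_iff_toReal_le (measure_ne_top _ _) hc₀).mpr (hc y)
  have : IsProbabilityMeasure (P.map Y) := Measure.isProbabilityMeasure_map hY
  refine ENNReal.toReal_le_of_le_ofReal hc₀ ?_
  calc P ((X + Y) ⁻¹' B) = ((P.map X).prod (P.map Y)) ((fun p : E × E ↦ p.1 + p.2) ⁻¹' B) := by
        rw [← Measure.map_apply_of_aemeasurable (hX.add hY) hB,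
          hXY.map_add_eq_map_conv_map₀ hX hY, Measure.conv, Measure.map_apply measurable_add hB]
    _ = ∫⁻ y, (P.map X) ((· + y) ⁻¹' B) ∂(P.map Y) := Measure.prod_apply_symm (measurable_add hB)
    _ ≤ ∫⁻ _, ENNReal.ofReal c ∂(P.map Y) := lintegral_mono hslice
    _ = ENNReal.ofReal c := by simp

end AddMonoid

section AddCommMonoid

variable {Ω E : Type*} [MeasurableSpace Ω] {P : Measure Ω}
  [AddCommMonoid E] [MeasurableSpace E] [MeasurableAdd₂ E]

lemma ProbabilityTheory.iIndepFun.indepFun_finsetSum {ι : Type*} {X : ι → Ω → E}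
    (hindep : iIndepFun X P) (hmeas : ∀ i, Measurable (X i)) {S T : Finset ι}
    (hST : Disjoint S T) :
    IndepFun (∑ i ∈ S, X i) (∑ i ∈ T, X i) P := by
  have := (hindep.indepFun_finset S T hST hmeas).comp
    (φ := fun v : S → E ↦ ∑ i, v i) (ψ := fun v : T → E ↦ ∑ i, v i) (by fun_prop) (by fun_prop)
  convert this using 1 <;> ext ω <;>
    simpa only [Finset.sum_apply, Function.comp_apply] using (sum_coe_sort _ fun i ↦ X i ω).symm

lemma identDistrib_sum_Ico_sum_range [IsFiniteMeasure P] {X : ℕ → Ω → E}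
    (hmeas : ∀ i, Measurable (X i)) (hindep : iIndepFun X P)
    (hident : ∀ i, IdentDistrib (X i) (X 0) P P) (a c : ℕ) :
    IdentDistrib (∑ i ∈ Ico a (a + c), X i) (∑ i ∈ range c, X i) P P := by
  induction c with
  | zero =>
    simp only [add_zero, Ico_self, range_zero, sum_empty]
    exact IdentDistrib.refl aemeasurable_const
  | succ c ih =>
    rw [← add_assoc, sum_Ico_succ_top (by omega), sum_range_succ]
    exact ih.add_of_indepFun ((hident _).trans (hident c).symm)
      (hindep.indepFun_finsetSum_of_notMem hmeas (by simp))
      (hindep.indepFun_finsetSum_of_notMem hmeas (by simp))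

end AddCommMonoid

section Metric

variable {Ω E : Type*} [MeasurableSpace Ω] {P : Measure Ω} [IsProbabilityMeasure P]

lemma nonempty_inter_inter_of_two_lt_measureReal_add {A B C : Set Ω} (hB : MeasurableSet B)
    (hC : MeasurableSet C) (h : 2 < P.real A + P.real B + P.real C) : (A ∩ B ∩ C).Nonempty := by
  refine nonempty_inter_of_measureReal_lt_add (μ := P) hC (Set.subset_univ _) (Set.subset_univ _) ?_
  have := measureReal_union_add_inter (μ := P) (s := A) hB
  linarith [probReal_univ (μ := P), measureReal_le_one (μ := P) (s := A ∪ B)]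

variable [SeminormedAddCommGroup E] [MeasurableSpace E] [OpensMeasurableSpace E]

lemma dist_le_add_of_one_lt_measureReal_add {Y : Ω → E} (hY : Measurable Y) {y z : E} {r s : ℝ}
    (h : 1 < P.real (Y ⁻¹' closedBall y r) + P.real (Y ⁻¹' closedBall z s)) :
    dist y z ≤ r + s := by
  obtain ⟨ω, hy, hz⟩ := nonempty_inter_of_measureReal_lt_add (μ := P)
    (s := Y ⁻¹' closedBall y r) (hY measurableSet_closedBall)
    (Set.subset_univ _) (Set.subset_univ _) (by rwa [probReal_univ])
  rw [Set.mem_preimage, mem_closedBall] at hy hz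
  linarith [dist_triangle_left y z (Y ω)]

lemma norm_add_sub_le_of_two_lt_measureReal_add [MeasurableAdd₂ E] {U V : Ω → E}
    (hU : Measurable U) (hV : Measurable V) {u v w : E} {r : ℝ}
    (h : 2 < P.real (U ⁻¹' closedBall u r) + P.real (V ⁻¹' closedBall v r)
      + P.real ((U + V) ⁻¹' closedBall w r)) :
    ‖u + v - w‖ ≤ 3 * r := by
  obtain ⟨ω, ⟨hu, hv⟩, hw⟩ := nonempty_inter_inter_of_two_lt_measureReal_add
    (hV measurableSet_closedBall) ((hU.add hV) measurableSet_closedBall) h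
  simp only [Set.mem_preimage, mem_closedBall, Pi.add_apply] at hu hv hw
  rw [← dist_eq_norm]
  calc dist (u + v) w ≤ dist (u + v) (U ω + V ω) + dist (U ω + V ω) w := dist_triangle _ _ _
    _ ≤ dist u (U ω) + dist v (V ω) + dist (U ω + V ω) w := by gcongr; exact dist_add_add_le ..
    _ ≤ 3 * r := by rw [dist_comm u, dist_comm v]; linarith

lemma ProbabilityTheory.IndepFun.measureReal_lt_norm_mul_le {Y Z : Ω → E} (hYZ : IndepFun Y Z P)
    (t r : ℝ) :
    P.real {ω | t < ‖Y ω‖} * P.real {ω | ‖Z ω‖ ≤ r} ≤ P.real {ω | t - r < ‖(Y + Z) ω‖} := by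
  have hmul := congrArg ENNReal.toReal <| hYZ.measure_inter_preimage_eq_mul {e | t < ‖e‖}
    {e | ‖e‖ ≤ r} (measurableSet_lt measurable_const continuous_norm.measurable)
    (measurableSet_le continuous_norm.measurable measurable_const)
  rw [ENNReal.toReal_mul] at hmul
  calc P.real {ω | t < ‖Y ω‖} * P.real {ω | ‖Z ω‖ ≤ r}
      = P.real ({ω | t < ‖Y ω‖} ∩ {ω | ‖Z ω‖ ≤ r}) := hmul.symm
    _ ≤ _ := measureReal_mono fun ω ⟨hYω, hZω⟩ ↦ ?_
  simp only [Set.mem_ofPred_eq, Pi.add_apply] at hYω hZω ⊢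
  linarith [norm_le_add_norm_add (Y ω) (Z ω)]

end Metric

lemma norm_le_of_norm_add_sub_le {E : Type*} [NormedAddCommGroup E] [NormedSpace ℝ E]
    {x : ℕ → E} {k : ℕ} {δ ε : ℝ} (hadd : ∀ a b, a + b ≤ k → ‖x a + x b - x (a + b)‖ ≤ δ)
    (hk : ‖x k‖ ≤ ε) {m : ℕ} (hm : m ≤ k) : ‖x m‖ ≤ 2 * δ + ε := by
  obtain ⟨n, hn, hmax⟩ := exists_max_image (range (k + 1)) (‖x ·‖) nonempty_range_add_one
  replace hmax : ∀ m ≤ k, ‖x m‖ ≤ ‖x n‖ := fun m hm ↦ hmax m (mem_range_succ_iff.2 hm)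
  rw [mem_range_succ_iff] at hn
  refine (hmax m hm).trans ?_
  have hδ : 0 ≤ δ := (norm_nonneg _).trans (hadd 0 0 (by omega))
  have hε : 0 ≤ ε := (norm_nonneg _).trans hk
  have htwo : ‖x n + x n‖ = 2 * ‖x n‖ := by rw [← two_smul ℝ, norm_smul, Real.norm_two]
  rcases le_or_gt (n + n) k with hnn | hnn
  · linarith [norm_sub_norm_le (x n + x n) (x (n + n)), hadd n n hnn, hmax (n + n) hnn]
  · -- reflect `n` in `k`: with `a + b = n` and `n + b = k`, `2 x n ≈ x a + x k`
    obtain ⟨a, b, hab, hnb⟩ : ∃ a b, a + b = n ∧ n + b = k :=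
      ⟨n + n - k, k - n, by omega, by omega⟩
    have h₁ := hadd a b (by omega)
    have h₂ := hadd n b (by omega)
    rw [hab] at h₁
    rw [hnb] at h₂
    have : ‖x n + x n‖ ≤ ‖x a + x b - x n‖ + ‖x n + x b - x k‖ + ‖x a‖ + ‖x k‖ := by
      calc ‖x n + x n‖ = ‖-(x a + x b - x n) + (x n + x b - x k) + x a + x k‖ := by
            congr 1; abel
        _ ≤ ‖-(x a + x b - x n)‖ + ‖x n + x b - x k‖ + ‖x a‖ + ‖x k‖ := norm_add₄_le
        _ = _ := by rw [norm_neg]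
    linarith [hmax a (by omega)]

section PartialSums

variable {Ω E : Type*} [MeasurableSpace Ω] {P : Measure Ω} [IsProbabilityMeasure P]
  [NormedAddCommGroup E] [MeasurableSpace E] [BorelSpace E] [SecondCountableTopology E]
  {X : ℕ → Ω → E}

lemma exists_lt_measureReal_sum_range_mem_closedBall (hmeas : ∀ i, Measurable (X i))
    (hindep : iIndepFun X P) {c s : ℝ} {m k : ℕ} (hmk : m ≤ k)
    (h : c < P.real ((∑ i ∈ range k, X i) ⁻¹' closedBall 0 s)) :
    ∃ y, c < P.real ((∑ i ∈ range m, X i) ⁻¹' closedBall y s) := by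
  by_contra! hc
  refine h.not_ge ?_
  rw [← sum_range_add_sum_Ico _ hmk]
  refine (hindep.indepFun_finsetSum hmeas ?_).measureReal_add_preimage_le (by fun_prop)
    (by fun_prop) measurableSet_closedBall fun y ↦ ?_
  · rw [range_eq_Ico]
    exact Ico_disjoint_Ico_consecutive 0 m k
  · rw [preimage_add_right_closedBall, zero_sub]
    exact hc (-y)

lemma norm_add_sub_le_of_lt_measureReal_sum_range_mem_closedBall
    (hmeas : ∀ i, Measurable (X i)) (hindep : iIndepFun X P)
    (hident : ∀ i, IdentDistrib (X i) (X 0) P P) {x : ℕ → E} {s : ℝ} {k : ℕ}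
    (hx : ∀ m ≤ k, 2 / 3 < P.real ((∑ i ∈ range m, X i) ⁻¹' closedBall (x m) s))
    {a b : ℕ} (hab : a + b ≤ k) :
    ‖x a + x b - x (a + b)‖ ≤ 3 * s := by
  have hblock : P.real ((∑ i ∈ Ico a (a + b), X i) ⁻¹' closedBall (x b) s)
      = P.real ((∑ i ∈ range b, X i) ⁻¹' closedBall (x b) s) :=
    congrArg ENNReal.toReal <|
      (identDistrib_sum_Ico_sum_range hmeas hindep hident a b).measure_mem_eq
        measurableSet_closedBall
  refine norm_add_sub_le_of_two_lt_measureReal_add (P := P) (U := ∑ i ∈ range a, X i)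
    (V := ∑ i ∈ Ico a (a + b), X i) (by fun_prop) (by fun_prop) ?_
  rw [sum_range_add_sum_Ico _ (Nat.le_add_right a b), hblock]
  linarith [hx a (by omega), hx b (by omega), hx (a + b) hab]

lemma lt_measureReal_norm_sum_Ico_le (hmeas : ∀ i, Measurable (X i)) (hindep : iIndepFun X P)
    (hident : ∀ i, IdentDistrib (X i) (X 0) P P) {j k : ℕ} (hjk : j ≤ k) {y : E} {c s r : ℝ}
    (h : c < P.real ((∑ i ∈ range (k - j), X i) ⁻¹' closedBall y s)) (hr : ‖y‖ + s ≤ r) :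
    c < P.real {ω | ‖(∑ i ∈ Ico j k, X i) ω‖ ≤ r} := by
  have hid := identDistrib_sum_Ico_sum_range hmeas hindep hident j (k - j)
  rw [Nat.add_sub_cancel' hjk] at hid
  calc c < P.real ((∑ i ∈ range (k - j), X i) ⁻¹' closedBall y s) := h
    _ = P.real ((∑ i ∈ Ico j k, X i) ⁻¹' closedBall y s) :=
      congrArg ENNReal.toReal (hid.measure_mem_eq measurableSet_closedBall).symm
    _ ≤ _ := measureReal_mono fun ω hω ↦ by
      rw [Set.mem_preimage, mem_closedBall, dist_eq_norm] at hω
      exact (norm_le_norm_add_norm_sub' _ y).trans (by linarith)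

end PartialSums

theorem sums_iid_comparison_general
    {Ω : Type*} [MeasurableSpace Ω] {P : Measure Ω} [IsProbabilityMeasure P]
    {E : Type*} [NormedAddCommGroup E] [NormedSpace ℝ E]
    [MeasurableSpace E] [BorelSpace E] [SecondCountableTopology E]
    (X : ℕ → Ω → E) (hmeas : ∀ i, Measurable (X i))
    (hindep : iIndepFun X P)
    (hident : ∀ i, IdentDistrib (X i) (X 0) P P)
    {j k : ℕ} (hjk : j ≤ k) {t : ℝ} :
    P {ω | t < ‖∑ i ∈ Finset.range j, X i ω‖} ≤
      3 * P {ω | t / 10 < ‖∑ i ∈ Finset.range k, X i ω‖} := by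
  suffices P.real {ω | t < ‖(∑ i ∈ range j, X i) ω‖} ≤
      3 * P.real {ω | t / 10 < ‖(∑ i ∈ range k, X i) ω‖} by
    simp only [Finset.sum_apply] at this
    rwa [measureReal_def, measureReal_def, ← ENNReal.toReal_ofNat, ← ENNReal.toReal_mul,
      ENNReal.toReal_le_toReal (by finiteness) (by finiteness)] at this
  set s := t / 10
  rcases le_or_gt 1 (3 * P.real {ω | s < ‖(∑ i ∈ range k, X i) ω‖}) with hbig | hsmall
  · exact measureReal_le_one.trans hbig
  have hk : 2 / 3 < P.real ((∑ i ∈ range k, X i) ⁻¹' closedBall 0 s) := by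
    have hcompl : (∑ i ∈ range k, X i) ⁻¹' closedBall 0 s
        = {ω | s < ‖(∑ i ∈ range k, X i) ω‖}ᶜ := by
      ext; simp
    rw [hcompl, probReal_compl_eq_one_sub (measurableSet_lt measurable_const (by fun_prop))]
    linarith
  choose! x hx using fun m (hm : m ≤ k) ↦
    exists_lt_measureReal_sum_range_mem_closedBall hmeas hindep hm hk
  have hxk : ‖x k‖ ≤ 2 * s := by
    have := dist_le_add_of_one_lt_measureReal_add (P := P) (Y := ∑ i ∈ range k, X i) (y := x k)
      (z := 0) (by fun_prop) (by linarith [hx k le_rfl])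
    rwa [dist_zero_right, ← two_mul] at this
  have hxjk : ‖x (k - j)‖ ≤ 8 * s := by
    linarith [norm_le_of_norm_add_sub_le (fun a b hab ↦
      norm_add_sub_le_of_lt_measureReal_sum_range_mem_closedBall hmeas hindep hident hx hab)
      hxk (Nat.sub_le k j)]
  have hrest := lt_measureReal_norm_sum_Ico_le hmeas hindep hident hjk (r := 9 * s)
    (hx _ (Nat.sub_le k j)) (by linarith)
  have key := (hindep.indepFun_finsetSum hmeas (S := range j) (T := Ico j k) (by
    rw [range_eq_Ico]; exact Ico_disjoint_Ico_consecutive 0 j k)).measureReal_lt_norm_mul_le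
      t (9 * s)
  rw [sum_range_add_sum_Ico _ hjk, show t - 9 * s = s by ring] at key
  nlinarith [measureReal_nonneg (μ := P) (s := {ω | t < ‖(∑ i ∈ range j, X i) ω‖})]

/-- Theorem 1 of Montgomery-Smith, "Comparison of Sums of Independent Identically
Distributed Random Variables": if `X 0, X 1, ...` are i.i.d. Banach-space-valued random
variables and `S k = ∑_{i<k} X i` is the `k`-th partial sum, then for `1 ≤ j ≤ k` and
`t > 0`, `P(‖S j‖ > t) ≤ 3 P(‖S k‖ > t/10)`. -/
theorem sums_iid_comparison
    {Ω : Type*} [MeasurableSpace Ω] {P : Measure Ω} [IsProbabilityMeasure P]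
    {E : Type*} [NormedAddCommGroup E] [NormedSpace ℝ E] [CompleteSpace E]
    [MeasurableSpace E] [BorelSpace E] [SecondCountableTopology E]
    (X : ℕ → Ω → E) (hmeas : ∀ i, Measurable (X i))
    (hindep : iIndepFun X P)
    (hident : ∀ i, IdentDistrib (X i) (X 0) P P)
    {j k : ℕ} (hj : 1 ≤ j) (hjk : j ≤ k) {t : ℝ} (ht : 0 < t) :
    P {ω | t < ‖∑ i ∈ Finset.range j, X i ω‖} ≤
      3 * P {ω | t / 10 < ‖∑ i ∈ Finset.range k, X i ω‖} :=
  sums_iid_comparison_general X hmeas hindep hident hjk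
end

section
/- Let $X_1, X_2, \dots$ be independent identically distributed random variables with values in a Banach space, with partial sums $S_j = \sum_{i=1}^j X_i$. Let $t > 0$ and $k \ge 1$, and suppose that for each $1 \le j \le k$ the partial sum $S_j$ has a $t$-concentration point $s_j$. Then for all $1 \le j \le k$, $\|k\, s_j - j\, s_k\| \le 3(k + j)t$. -/
open MeasureTheory ProbabilityTheory
open scoped ENNReal

/-!
Three events of probability `> 2/3` share an outcome `ω`. Apply this to
`‖S_a - s_a‖ ≤ t`, `‖S_{a+b} - S_a - s_b‖ ≤ t` and `‖S_{a+b} - s_{a+b}‖ ≤ t`; the middle event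
is as likely as `‖S_b - s_b‖ ≤ t` because `S_{a+b} - S_a` is distributed like `S_b`. The
triangle inequality at `ω` gives `‖s_a + s_b - s_{a+b}‖ ≤ 3t`, and the Euclidean algorithm on
`(j, k)`, through `k s_j - j s_k = ((k - j) s_j - j s_{k-j}) + j (s_j + s_{k-j} - s_k)`, turns
this approximate additivity into `‖k s_j - j s_k‖ ≤ 3(k + j)t`.
-/

namespace MeasureTheory

theorem nonempty_inter_inter_of_two_lt_add {α : Type*} [MeasurableSpace α] {μ : Measure α}
    [IsProbabilityMeasure μ] {A B C : Set α} (hA : MeasurableSet A) (hB : MeasurableSet B)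
    (h : 2 < μ A + μ B + μ C) : (A ∩ B ∩ C).Nonempty := by
  refine nonempty_inter_of_measure_lt_add' μ (hA.inter hB) (Set.subset_univ _)
    (Set.subset_univ _) ?_
  rw [measure_univ]
  by_contra! hle
  have hunion : μ (A ∪ B) + μ (A ∩ B) = μ A + μ B := measure_union_add_inter A hB
  have : μ A + μ B + μ C ≤ 2 :=
    calc μ A + μ B + μ C ≤ 1 + (μ (A ∩ B) + μ C) := by
          rw [← hunion, add_assoc]
          gcongr
          exact prob_le_one
      _ ≤ 2 := by rw [← one_add_one_eq_two]; gcongr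
  exact this.not_gt h

end MeasureTheory

namespace ProbabilityTheory

variable {Ω : Type*} [MeasurableSpace Ω] {P : Measure Ω} {E : Type*} [MeasurableSpace E]

theorem identDistrib_pi_of_iIndepFun {ι κ : Type*} [Fintype κ] {X : ι → Ω → E}
    (hmeas : ∀ i, Measurable (X i)) (hindep : iIndepFun X P) {g h : κ → ι}
    (hg : g.Injective) (hh : h.Injective)
    (hident : ∀ i, IdentDistrib (X (g i)) (X (h i)) P P) :
    IdentDistrib (fun ω i ↦ X (g i) ω) (fun ω i ↦ X (h i) ω) P P where
  aemeasurable_fst := by fun_prop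
  aemeasurable_snd := by fun_prop
  map_eq := by
    rw [(hindep.precomp hg).map_fun_eq_pi_map fun i ↦ (hmeas _).aemeasurable,
      (hindep.precomp hh).map_fun_eq_pi_map fun i ↦ (hmeas _).aemeasurable]
    simp_rw [fun i ↦ (hident i).map_eq]

variable [NormedAddCommGroup E] [BorelSpace E] [SecondCountableTopology E]

theorem identDistrib_sum_range_add {X : ℕ → Ω → E} (hmeas : ∀ i, Measurable (X i))
    (hindep : iIndepFun X P) (hident : ∀ i, IdentDistrib (X i) (X 0) P P) (a b : ℕ) :
    IdentDistrib (fun ω ↦ ∑ i ∈ Finset.range b, X (a + i) ω)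
      (fun ω ↦ ∑ i ∈ Finset.range b, X i ω) P P := by
  have hblock :
      IdentDistrib (fun ω (i : Fin b) ↦ X (a + i) ω) (fun ω (i : Fin b) ↦ X i ω) P P :=
    identDistrib_pi_of_iIndepFun hmeas hindep (fun i j hij ↦ Fin.ext (by simpa using hij))
      Fin.val_injective fun i ↦ (hident _).trans (hident _).symm
  simpa only [Finset.sum_range, Function.comp_def] using
    hblock.comp (Finset.measurable_sum Finset.univ fun i _ ↦ measurable_pi_apply i)

theorem norm_add_sub_le_of_concentration [IsProbabilityMeasure P] {X : ℕ → Ω → E}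
    (hmeas : ∀ i, Measurable (X i)) (hindep : iIndepFun X P)
    (hident : ∀ i, IdentDistrib (X i) (X 0) P P) {a b : ℕ} {x y z : E} {t : ℝ}
    (hx : (2 : ℝ≥0∞) / 3 < P {ω | ‖(∑ i ∈ Finset.range a, X i ω) - x‖ ≤ t})
    (hy : (2 : ℝ≥0∞) / 3 < P {ω | ‖(∑ i ∈ Finset.range b, X i ω) - y‖ ≤ t})
    (hz : (2 : ℝ≥0∞) / 3 < P {ω | ‖(∑ i ∈ Finset.range (a + b), X i ω) - z‖ ≤ t}) :
    ‖x + y - z‖ ≤ 3 * t := by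
  set S : ℕ → Ω → E := fun n ω ↦ ∑ i ∈ Finset.range n, X i ω
  set T : Ω → E := fun ω ↦ ∑ i ∈ Finset.range b, X (a + i) ω
  have hS : ∀ n, Measurable (S n) := fun n ↦ Finset.measurable_sum _ fun i _ ↦ hmeas i
  have hy' : (2 : ℝ≥0∞) / 3 < P {ω | ‖T ω - y‖ ≤ t} := by
    refine hy.trans_eq ?_
    exact ((identDistrib_sum_range_add hmeas hindep hident a b).measure_mem_eq
      (s := {e | ‖e - y‖ ≤ t}) (measurableSet_le (by fun_prop) measurable_const)).symm
  obtain ⟨ω, ⟨hωx, hωy⟩, hωz⟩ : ({ω | ‖S a ω - x‖ ≤ t} ∩ {ω | ‖T ω - y‖ ≤ t} ∩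
      {ω | ‖S (a + b) ω - z‖ ≤ t}).Nonempty := by
    refine nonempty_inter_inter_of_two_lt_add (μ := P)
      (measurableSet_le (by fun_prop) measurable_const)
      (measurableSet_le (by fun_prop) measurable_const) ?_
    calc (2 : ℝ≥0∞) = 2 / 3 + 2 / 3 + 2 / 3 := (ENNReal.add_thirds 2).symm
      _ < _ := ENNReal.add_lt_add (ENNReal.add_lt_add hx hy') hz
  have hsplit : S (a + b) ω = S a ω + T ω := Finset.sum_range_add (X · ω) a b
  calc ‖x + y - z‖ = ‖(S (a + b) ω - z) - (S a ω - x) - (T ω - y)‖ := by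
        rw [hsplit]; congr 1; abel
    _ ≤ ‖S (a + b) ω - z‖ + ‖S a ω - x‖ + ‖T ω - y‖ :=
        (norm_sub_le _ _).trans (by gcongr; exact norm_sub_le _ _)
    _ ≤ 3 * t := by simp only [Set.mem_ofPred_eq] at hωx hωy hωz; linarith

end ProbabilityTheory

theorem norm_natCast_smul_sub_le_of_norm_add_sub_le {E : Type*} [NormedAddCommGroup E]
    [NormedSpace ℝ E] {s : ℕ → E} {C : ℝ} (hC : 0 ≤ C) {k : ℕ}
    (hadd : ∀ a b, 1 ≤ a → 1 ≤ b → a + b ≤ k → ‖s a + s b - s (a + b)‖ ≤ C)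
    {a b : ℕ} (ha : 1 ≤ a) (hb : 1 ≤ b) (hak : a ≤ k) (hbk : b ≤ k) :
    ‖(b : ℝ) • s a - (a : ℝ) • s b‖ ≤ (a + b) * C := by
  induction hn : a + b using Nat.strong_induction_on generalizing a b with | _ n ih =>
  wlog hab : a ≤ b generalizing a b
  · rw [norm_sub_rev, add_comm]
    exact this hb ha hbk hak (by omega) (by omega)
  obtain ⟨c, rfl⟩ := Nat.exists_eq_add_of_le hab
  rcases Nat.eq_zero_or_pos c with rfl | hc
  · simp only [add_zero, sub_self, norm_zero]
    positivity
  have hdecomp : ((a + c : ℕ) : ℝ) • s a - (a : ℝ) • s (a + c)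
      = ((c : ℝ) • s a - (a : ℝ) • s c) + (a : ℝ) • (s a + s c - s (a + c)) := by
    push_cast; module
  have hrec : ‖(c : ℝ) • s a - (a : ℝ) • s c‖ ≤ (a + c) * C :=
    ih (a + c) (by omega) ha hc hak (by omega) rfl
  calc ‖((a + c : ℕ) : ℝ) • s a - (a : ℝ) • s (a + c)‖
      ≤ ‖(c : ℝ) • s a - (a : ℝ) • s c‖ + a * ‖s a + s c - s (a + c)‖ := by
        rw [hdecomp]
        exact (norm_add_le _ _).trans_eq (by rw [norm_smul, Real.norm_natCast])
    _ ≤ (a + c) * C + a * C := by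
        gcongr
        exact hadd a c ha hc hbk
    _ = (a + (a + c : ℕ)) * C := by push_cast; ring

theorem concentration_points_partial_sums_general
    {Ω : Type*} [MeasurableSpace Ω] {P : Measure Ω} [IsProbabilityMeasure P]
    {E : Type*} [NormedAddCommGroup E] [NormedSpace ℝ E]
    [MeasurableSpace E] [BorelSpace E] [SecondCountableTopology E]
    (X : ℕ → Ω → E) (hmeas : ∀ i, Measurable (X i))
    (hindep : iIndepFun X P)
    (hident : ∀ i, IdentDistrib (X i) (X 0) P P)
    {t : ℝ} (ht : 0 < t) {k : ℕ} (s : ℕ → E)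
    (hconc : ∀ j, 1 ≤ j → j ≤ k →
      (2 : ℝ≥0∞) / 3 < P {ω | ‖(∑ i ∈ Finset.range j, X i ω) - s j‖ ≤ t}) :
    ∀ j, 1 ≤ j → j ≤ k →
      ‖(k : ℝ) • s j - (j : ℝ) • s k‖ ≤ 3 * ((k : ℝ) + (j : ℝ)) * t := by
  intro j hj hjk
  have hadd : ∀ a b, 1 ≤ a → 1 ≤ b → a + b ≤ k → ‖s a + s b - s (a + b)‖ ≤ 3 * t :=
    fun a b ha hb hab ↦ norm_add_sub_le_of_concentration hmeas hindep hident
      (hconc a ha (by omega)) (hconc b hb (by omega)) (hconc (a + b) (by omega) hab)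
  calc ‖(k : ℝ) • s j - (j : ℝ) • s k‖ ≤ (j + k) * (3 * t) :=
        norm_natCast_smul_sub_le_of_norm_add_sub_le (by positivity) hadd hj (by omega) hjk le_rfl
    _ = 3 * ((k : ℝ) + (j : ℝ)) * t := by ring

/-- Corollary 3: if the partial sums `S_j` of i.i.d. random variables have
`t`-concentration points `s_j` for `1 ≤ j ≤ k`, then `‖k • s_j - j • s_k‖ ≤ 3(k+j)t`. -/
theorem concentration_points_partial_sums
    {Ω : Type*} [MeasurableSpace Ω] {P : Measure Ω} [IsProbabilityMeasure P]
    {E : Type*} [NormedAddCommGroup E] [NormedSpace ℝ E] [CompleteSpace E]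
    [MeasurableSpace E] [BorelSpace E] [SecondCountableTopology E]
    (X : ℕ → Ω → E) (hmeas : ∀ i, Measurable (X i))
    (hindep : iIndepFun X P)
    (hident : ∀ i, IdentDistrib (X i) (X 0) P P)
    {t : ℝ} (ht : 0 < t) {k : ℕ} (hk : 1 ≤ k) (s : ℕ → E)
    (hconc : ∀ j, 1 ≤ j → j ≤ k →
      (2 : ℝ≥0∞) / 3 < P {ω | ‖(∑ i ∈ Finset.range j, X i ω) - s j‖ ≤ t}) :
    ∀ j, 1 ≤ j → j ≤ k →
      ‖(k : ℝ) • s j - (j : ℝ) • s k‖ ≤ 3 * ((k : ℝ) + (j : ℝ)) * t :=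
  concentration_points_partial_sums_general X hmeas hindep hident ht s hconc
end

section
/- Let $X_1, X_2, \dots$ be independent identically distributed random variables with values in a Banach space, with partial sums $S_j = \sum_{i=1}^j X_i$. Let $t > 0$ and $k \ge 1$, and suppose that for each $1 \le j \le k$ the partial sum $S_j$ has a $t$-concentration point $s_j$. Then for all $1 \le j \le k$, $\|k\, s_j - j\, s_k\| \le 3(j + k - 2h)t$, where $h$ is the greatest common divisor of $j$ and $k$. -/
open MeasureTheory ProbabilityTheory
open scoped ENNReal

/-!
Three events of probability `> 2/3` always meet. Applied to the events on which `S_a`, the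
block sum `X_{a+1} + ⋯ + X_{a+b}` (distributed like `S_b`) and `S_{a+b}` are `t`-close to `s_a`,
`s_b` and `s_{a+b}`, this gives the almost additivity `‖s_{a+b} - s_a - s_b‖ ≤ 3t` for
`a + b ≤ k`. The gcd bound then follows by running the subtractive Euclidean algorithm on
`(j, k)`: each step `(j, j + d) ↦ (j, d)` costs `j · 3t`, and these costs add up to
`(j + k - 2 gcd(j, k)) · 3t`.
-/

theorem norm_smul_sub_smul_le_gcd_of_almost_additive {E : Type*} [SeminormedAddCommGroup E]
    [NormedSpace ℝ E] {k : ℕ} {s : ℕ → E} {c : ℝ}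
    (hs : ∀ a b, 1 ≤ a → 1 ≤ b → a + b ≤ k → ‖s (a + b) - (s a + s b)‖ ≤ c)
    {j m : ℕ} (hj : 1 ≤ j) (hm : 1 ≤ m) (hjk : j ≤ k) (hmk : m ≤ k) :
    ‖(m : ℝ) • s j - (j : ℝ) • s m‖ ≤ ((j : ℝ) + m - 2 * Nat.gcd j m) * c := by
  induction hn : j + m using Nat.strong_induction_on generalizing j m with
  | _ n ih =>
  wlog hjm : j ≤ m generalizing j m
  · have := this hm hj hmk hjk (by omega) (by omega)
    rwa [norm_sub_rev, Nat.gcd_comm, add_comm (m : ℝ)] at this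
  obtain ⟨d, rfl⟩ := Nat.exists_eq_add_of_le hjm
  rcases Nat.eq_zero_or_pos d with rfl | hd
  · simp [← two_mul]
  have hrec := ih (j + d) (by omega) hj hd hjk (by omega) rfl
  have hadd := hs j d hj hd hmk
  calc ‖((j + d : ℕ) : ℝ) • s j - (j : ℝ) • s (j + d)‖
      = ‖((d : ℝ) • s j - (j : ℝ) • s d) + (j : ℝ) • -(s (j + d) - (s j + s d))‖ := by
        congr 1; push_cast; module
    _ ≤ ((j : ℝ) + d - 2 * Nat.gcd j d) * c + j * c := by
        refine (norm_add_le _ _).trans (add_le_add hrec ?_)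
        rw [norm_smul, norm_neg, Real.norm_natCast]
        exact mul_le_mul_of_nonneg_left hadd j.cast_nonneg
    _ = ((j : ℝ) + (j + d : ℕ) - 2 * Nat.gcd j (j + d)) * c := by
        rw [Nat.gcd_self_add_right]; push_cast; ring


theorem nonempty_inter_inter_of_measure_compl_lt_one_third {Ω : Type*} [MeasurableSpace Ω]
    {μ : Measure Ω} [IsProbabilityMeasure μ] {A B C : Set Ω}
    (hA : μ Aᶜ < 1 / 3) (hB : μ Bᶜ < 1 / 3) (hC : μ Cᶜ < 1 / 3) : (A ∩ B ∩ C).Nonempty := by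
  by_contra h
  have hcover : Aᶜ ∪ Bᶜ ∪ Cᶜ = Set.univ := by
    rw [← Set.compl_inter, ← Set.compl_inter, Set.not_nonempty_iff_eq_empty.mp h, Set.compl_empty]
  have := calc (1 : ℝ≥0∞) = μ (Aᶜ ∪ Bᶜ ∪ Cᶜ) := by rw [hcover, measure_univ]
    _ ≤ μ Aᶜ + μ Bᶜ + μ Cᶜ := (measure_union_le _ _).trans (by gcongr; exact measure_union_le _ _)
    _ < 1 / 3 + 1 / 3 + 1 / 3 := by gcongr
    _ = 1 := ENNReal.add_thirds 1
  exact lt_irrefl _ this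

section ConcentrationPoint

variable {Ω Ω' E : Type*} [SeminormedAddCommGroup E] {Y Z : Ω → E} {t : ℝ} {x y z : E}

theorem setOf_norm_sub_le_eq_preimage_closedBall (Y : Ω → E) (t : ℝ) (x : E) :
    {ω | ‖Y ω - x‖ ≤ t} = Y ⁻¹' Metric.closedBall x t :=
  Set.ext fun _ ↦ mem_closedBall_iff_norm.symm

variable [MeasurableSpace Ω] [MeasurableSpace Ω'] [MeasurableSpace E] {μ : Measure Ω}

def IsConcentrationPoint (μ : Measure Ω) (Y : Ω → E) (t : ℝ) (x : E) : Prop :=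
  2 / 3 < μ {ω | ‖Y ω - x‖ ≤ t}

variable [OpensMeasurableSpace E]

theorem IsConcentrationPoint.of_identDistrib {ν : Measure Ω'} {Y' : Ω' → E}
    (h : IdentDistrib Y Y' μ ν) (hx : IsConcentrationPoint ν Y' t x) :
    IsConcentrationPoint μ Y t x := by
  unfold IsConcentrationPoint at hx ⊢
  rwa [setOf_norm_sub_le_eq_preimage_closedBall,
    h.measure_mem_eq Metric.isClosed_closedBall.measurableSet,
    ← setOf_norm_sub_le_eq_preimage_closedBall]

variable [IsProbabilityMeasure μ]

theorem IsConcentrationPoint.measure_compl_lt_one_third (hY : AEMeasurable Y μ)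
    (hx : IsConcentrationPoint μ Y t x) : μ {ω | ‖Y ω - x‖ ≤ t}ᶜ < 1 / 3 := by
  have hmeas : NullMeasurableSet {ω | ‖Y ω - x‖ ≤ t} μ := by
    rw [setOf_norm_sub_le_eq_preimage_closedBall]
    exact hY.nullMeasurableSet_preimage Metric.isClosed_closedBall.measurableSet
  rw [prob_compl_eq_one_sub₀ hmeas]
  refine ENNReal.sub_lt_of_lt_add prob_le_one ?_
  calc (1 : ℝ≥0∞) = 1 / 3 + 2 / 3 := by
        rw [ENNReal.div_add_div_same, show (1 : ℝ≥0∞) + 2 = 3 by norm_num,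
          ENNReal.div_self three_ne_zero ENNReal.ofNat_ne_top]
    _ < 1 / 3 + μ {ω | ‖Y ω - x‖ ≤ t} :=
        ENNReal.add_lt_add_left (ENNReal.div_ne_top ENNReal.one_ne_top three_ne_zero) hx

theorem IsConcentrationPoint.norm_sub_add_le [MeasurableAdd₂ E] (hY : AEMeasurable Y μ)
    (hZ : AEMeasurable Z μ) (hx : IsConcentrationPoint μ Y t x)
    (hy : IsConcentrationPoint μ Z t y) (hz : IsConcentrationPoint μ (fun ω ↦ Y ω + Z ω) t z) :
    ‖z - (x + y)‖ ≤ 3 * t := by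
  obtain ⟨ω, ⟨hωx, hωy⟩, hωz⟩ := nonempty_inter_inter_of_measure_compl_lt_one_third
    (hx.measure_compl_lt_one_third hY) (hy.measure_compl_lt_one_third hZ)
    (hz.measure_compl_lt_one_third (hY.add hZ))
  simp only [Set.mem_ofPred_eq, Pi.add_apply] at hωx hωy hωz
  calc ‖z - (x + y)‖ = ‖(Y ω - x) + (Z ω - y) - (Y ω + Z ω - z)‖ := by congr 1; abel
    _ ≤ ‖Y ω - x‖ + ‖Z ω - y‖ + ‖Y ω + Z ω - z‖ :=
        (norm_sub_le _ _).trans (by gcongr; exact norm_add_le _ _)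
    _ ≤ 3 * t := by linarith

end ConcentrationPoint

section PartialSums

variable {Ω E : Type*} [MeasurableSpace Ω] {P : Measure Ω} {X : ℕ → Ω → E}

theorem identDistrib_sum_range_shift [AddCommMonoid E] [MeasurableSpace E] [MeasurableAdd₂ E]
    (hindep : iIndepFun X P) (hident : ∀ i, IdentDistrib (X i) (X 0) P P) (a b : ℕ) :
    IdentDistrib (fun ω ↦ ∑ i ∈ Finset.range b, X (a + i) ω)
      (fun ω ↦ ∑ i ∈ Finset.range b, X i ω) P P :=
  (IdentDistrib.pi (fun i ↦ (hident (a + i)).trans (hident i).symm)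
    (hindep.precomp (add_right_injective a)) hindep).comp
    (Finset.measurable_sum _ fun i _ ↦ measurable_pi_apply i)

theorem norm_sub_add_le_of_isConcentrationPoint_sum_range [SeminormedAddCommGroup E]
    [MeasurableSpace E] [OpensMeasurableSpace E] [MeasurableAdd₂ E] [IsProbabilityMeasure P]
    (hindep : iIndepFun X P) (hident : ∀ i, IdentDistrib (X i) (X 0) P P)
    {t : ℝ} {s : ℕ → E} {a b : ℕ}
    (ha : IsConcentrationPoint P (fun ω ↦ ∑ i ∈ Finset.range a, X i ω) t (s a))
    (hb : IsConcentrationPoint P (fun ω ↦ ∑ i ∈ Finset.range b, X i ω) t (s b))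
    (hab : IsConcentrationPoint P (fun ω ↦ ∑ i ∈ Finset.range (a + b), X i ω) t (s (a + b))) :
    ‖s (a + b) - (s a + s b)‖ ≤ 3 * t := by
  have hX : ∀ i, AEMeasurable (X i) P := fun i ↦ (hident i).aemeasurable_fst
  simp only [Finset.sum_range_add] at hab
  exact ha.norm_sub_add_le (Finset.aemeasurable_fun_sum _ fun i _ ↦ hX i)
    (Finset.aemeasurable_fun_sum _ fun i _ ↦ hX (a + i))
    (hb.of_identDistrib (identDistrib_sum_range_shift hindep hident a b)) hab

end PartialSums

theorem concentration_points_partial_sums_gcd_general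
    {Ω : Type*} [MeasurableSpace Ω] {P : Measure Ω} [IsProbabilityMeasure P]
    {E : Type*} [NormedAddCommGroup E] [NormedSpace ℝ E]
    [MeasurableSpace E] [BorelSpace E] [SecondCountableTopology E]
    (X : ℕ → Ω → E)
    (hindep : iIndepFun X P)
    (hident : ∀ i, IdentDistrib (X i) (X 0) P P)
    {t : ℝ} {k : ℕ} (s : ℕ → E)
    (hconc : ∀ j, 1 ≤ j → j ≤ k →
      (2 : ℝ≥0∞) / 3 < P {ω | ‖(∑ i ∈ Finset.range j, X i ω) - s j‖ ≤ t}) :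
    ∀ j, 1 ≤ j → j ≤ k →
      ‖(k : ℝ) • s j - (j : ℝ) • s k‖ ≤
        3 * ((j : ℝ) + (k : ℝ) - 2 * (Nat.gcd j k : ℝ)) * t := by
  intro j hj hjk
  have hadd : ∀ a b, 1 ≤ a → 1 ≤ b → a + b ≤ k → ‖s (a + b) - (s a + s b)‖ ≤ 3 * t :=
    fun a b ha hb hab ↦ norm_sub_add_le_of_isConcentrationPoint_sum_range hindep hident
      (hconc a ha (by omega)) (hconc b hb (by omega)) (hconc (a + b) (by omega) hab)
  calc ‖(k : ℝ) • s j - (j : ℝ) • s k‖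
      ≤ ((j : ℝ) + k - 2 * Nat.gcd j k) * (3 * t) :=
        norm_smul_sub_smul_le_gcd_of_almost_additive hadd hj (hj.trans hjk) hjk le_rfl
    _ = 3 * ((j : ℝ) + (k : ℝ) - 2 * (Nat.gcd j k : ℝ)) * t := by ring

/-- The refinement of Corollary 3 noted in the paper: if the partial sums `S_j` of i.i.d.
random variables have `t`-concentration points `s_j` for `1 ≤ j ≤ k`, then
`‖k • s_j - j • s_k‖ ≤ 3(j + k - 2h)t`, where `h = gcd(j, k)`. -/
theorem concentration_points_partial_sums_gcd
    {Ω : Type*} [MeasurableSpace Ω] {P : Measure Ω} [IsProbabilityMeasure P]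
    {E : Type*} [NormedAddCommGroup E] [NormedSpace ℝ E] [CompleteSpace E]
    [MeasurableSpace E] [BorelSpace E] [SecondCountableTopology E]
    (X : ℕ → Ω → E) (hmeas : ∀ i, Measurable (X i))
    (hindep : iIndepFun X P)
    (hident : ∀ i, IdentDistrib (X i) (X 0) P P)
    {t : ℝ} (ht : 0 < t) {k : ℕ} (hk : 1 ≤ k) (s : ℕ → E)
    (hconc : ∀ j, 1 ≤ j → j ≤ k →
      (2 : ℝ≥0∞) / 3 < P {ω | ‖(∑ i ∈ Finset.range j, X i ω) - s j‖ ≤ t}) :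
    ∀ j, 1 ≤ j → j ≤ k →
      ‖(k : ℝ) • s j - (j : ℝ) • s k‖ ≤
        3 * ((j : ℝ) + (k : ℝ) - 2 * (Nat.gcd j k : ℝ)) * t :=
  concentration_points_partial_sums_gcd_general X hindep hident s hconc
end

section
/- There is a universal constant $c > 0$ such that for every sequence $X_1, X_2, \dots$ of independent identically distributed random variables with values in a Banach space, with partial sums $S_j = \sum_{i=1}^j X_i$, every $k \ge 1$, and every $t > 0$, $\Pr\big(\sup_{1 \le j \le k} \|S_j\| > t\big) \le c\, \Pr(\|S_k\| > t/c)$. -/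
/-!
Write `S_j` for the partial sums, `t = 16 t₀` and `ε = P(‖S_k‖ > t₀)`; if `3ε ≥ 1` there is nothing
to prove. Otherwise independence and Fubini give for every `j ≤ k` a shift `d j` with
`P(‖S_j + d j‖ > t₀) ≤ ε`, and since the `X_i` are i.i.d. the same shift works for every block
`X_a + ⋯ + X_(a+j-1)`. As `3ε < 1`, some `ω` sees the blocks `[0, j)`, `[j, j + l)` and `[0, j + l)`
concentrated at once, so `d` is `3t₀`-quasi-additive on `[0, k]`; also `‖d k‖ ≤ 2t₀`, and a
Hyers–Ulam argument bounds every `‖d j‖` by `14t₀`. Hence each tail `S_k - S_j` has norm at most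
`15t₀` with probability at least `1 - ε`, and Ottaviani's inequality gives
`P(max_j ‖S_j‖ > 16t₀) ≤ 2ε`.
-/

open MeasureTheory ProbabilityTheory
open scoped ENNReal

section QuasiAdditive

def quasiAdditiveExtension {M : Type*} [AddMonoid M] (c : ℕ → M) (n m : ℕ) : M :=
  (m / n) • c n + c (m % n)

lemma quasiAdditiveExtension_mul_add {M : Type*} [AddMonoid M] (c : ℕ → M) {n r : ℕ} (q : ℕ)
    (hr : r < n) : quasiAdditiveExtension c n (n * q + r) = q • c n + c r := by
  have hn : 0 < n := r.zero_le.trans_lt hr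
  simp only [quasiAdditiveExtension, Nat.mul_add_div hn, Nat.div_eq_of_lt hr, add_zero,
    Nat.mul_add_mod, Nat.mod_eq_of_lt hr]

variable {E : Type*} [NormedAddCommGroup E] {c : ℕ → E} {n : ℕ} {δ : ℝ}

lemma norm_quasiAdditiveExtension_add_sub_le
    (h : ∀ j k, j + k ≤ n → ‖c (j + k) - c j - c k‖ ≤ δ) (hn : 0 < n) {k : ℕ} (hk : k ≤ n)
    (m : ℕ) :
    ‖quasiAdditiveExtension c n (m + k) - quasiAdditiveExtension c n m - c k‖ ≤ 2 * δ := by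
  have hδ : 0 ≤ δ := (norm_nonneg _).trans (h 0 0 (Nat.zero_le n))
  set q := m / n
  set r := m % n
  have hr : r < n := Nat.mod_lt m hn
  have hm : m = n * q + r := (Nat.div_add_mod m n).symm
  rw [hm, quasiAdditiveExtension_mul_add c q hr]
  rcases lt_or_ge (r + k) n with hrk | hrk
  · rw [add_assoc, quasiAdditiveExtension_mul_add c q hrk]
    calc ‖q • c n + c (r + k) - (q • c n + c r) - c k‖ = ‖c (r + k) - c r - c k‖ := by
          congr 1; abel
      _ ≤ 2 * δ := by linarith [h r k hrk.le]
  · obtain ⟨s, rfl⟩ : ∃ s, k = (n - r) + s := ⟨r + k - n, by omega⟩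
    have hs : s < n := by omega
    rw [show n * q + r + (n - r + s) = n * (q + 1) + s by rw [Nat.mul_succ]; omega,
      quasiAdditiveExtension_mul_add c (q + 1) hs]
    have h₁ := h r (n - r) (by omega)
    have h₂ := h (n - r) s (by omega)
    rw [Nat.add_sub_cancel' hr.le] at h₁
    calc ‖(q + 1) • c n + c s - (q • c n + c r) - c (n - r + s)‖
        = ‖(c n - c r - c (n - r)) - (c (n - r + s) - c (n - r) - c s)‖ := by
          congr 1; rw [succ_nsmul]; abel
      _ ≤ ‖c n - c r - c (n - r)‖ + ‖c (n - r + s) - c (n - r) - c s‖ := norm_sub_le _ _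
      _ ≤ 2 * δ := by linarith

lemma norm_quasiAdditiveExtension_mul_sub_le
    (h : ∀ j k, j + k ≤ n → ‖c (j + k) - c j - c k‖ ≤ δ) (hn : 0 < n) {k : ℕ} (hk : k ≤ n)
    (a : ℕ) : ‖quasiAdditiveExtension c n (a * k) - a • c k‖ ≤ (2 * a + 1) * δ := by
  induction a with
  | zero => simpa [quasiAdditiveExtension] using h 0 0 (Nat.zero_le n)
  | succ a ih =>
    have hstep := norm_quasiAdditiveExtension_add_sub_le h hn hk (a * k)
    calc ‖quasiAdditiveExtension c n ((a + 1) * k) - (a + 1) • c k‖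
        = ‖(quasiAdditiveExtension c n (a * k + k) - quasiAdditiveExtension c n (a * k) - c k)
            + (quasiAdditiveExtension c n (a * k) - a • c k)‖ := by
          congr 1; rw [Nat.succ_mul, succ_nsmul]; abel
      _ ≤ 2 * δ + (2 * a + 1) * δ := (norm_add_le _ _).trans (add_le_add hstep ih)
      _ = (2 * ↑(a + 1) + 1) * δ := by push_cast; ring

/-- `n • c k` and `k • c n` both approximate `quasiAdditiveExtension c n (n * k)`, with errors
linear in `n`. -/
theorem norm_le_norm_add_of_quasiAdditive [NormedSpace ℝ E]
    (h : ∀ j k, j + k ≤ n → ‖c (j + k) - c j - c k‖ ≤ δ) {k : ℕ} (hk : k ≤ n) :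
    ‖c k‖ ≤ ‖c n‖ + 4 * δ := by
  have h₀ : ‖c 0‖ ≤ δ := by simpa using h 0 0 (Nat.zero_le n)
  rcases Nat.eq_zero_or_pos n with rfl | hn
  · rw [Nat.le_zero.mp hk]
    linarith [norm_nonneg (c 0)]
  have hnk := norm_quasiAdditiveExtension_mul_sub_le h hn hk n
  rw [← add_zero (n * k), quasiAdditiveExtension_mul_add c k hn] at hnk
  have hδ : 0 ≤ δ := (norm_nonneg _).trans h₀
  have hkn : (k : ℝ) ≤ n := by exact_mod_cast hk
  have hn₁ : (1 : ℝ) ≤ n := by exact_mod_cast hn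
  have key : (n : ℝ) * ‖c k‖ ≤ n * (‖c n‖ + 4 * δ) :=
    calc (n : ℝ) * ‖c k‖ = ‖n • c k‖ := by rw [RCLike.norm_nsmul ℝ, nsmul_eq_mul]
      _ = ‖(k • c n + c 0) - (k • c n + c 0 - n • c k)‖ := by rw [sub_sub_cancel]
      _ ≤ ‖k • c n‖ + ‖c 0‖ + ‖k • c n + c 0 - n • c k‖ :=
          (norm_sub_le _ _).trans (by gcongr; exact norm_add_le _ _)
      _ ≤ k * ‖c n‖ + δ + (2 * n + 1) * δ := by
          rw [RCLike.norm_nsmul ℝ, nsmul_eq_mul]; linarith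
      _ ≤ n * (‖c n‖ + 4 * δ) := by nlinarith [norm_nonneg (c n)]
  exact le_of_mul_le_mul_left key (by linarith)

end QuasiAdditive

section PartialSums

variable {Ω E : Type*} {mΩ : MeasurableSpace Ω} {P : Measure Ω} {mE : MeasurableSpace E}
  {X : ℕ → Ω → E}

theorem measurable_sum_iSup_comap [AddCommMonoid E] [MeasurableAdd₂ E] {T : Set ℕ}
    {s : Finset ℕ} (hs : ↑s ⊆ T) :
    Measurable[⨆ i ∈ T, mE.comap (X i)] fun ω => ∑ i ∈ s, X i ω :=
  Finset.measurable_sum s fun i hi =>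
    (comap_measurable (X i)).mono (le_iSup₂ (f := fun i _ => mE.comap (X i)) i (hs hi)) le_rfl

theorem ProbabilityTheory.iIndepFun.indep_iSup_comap_Iio_Ici (hX : ∀ i, Measurable (X i))
    (h : iIndepFun X P) (j : ℕ) :
    Indep (⨆ i ∈ Set.Iio j, mE.comap (X i)) (⨆ i ∈ Set.Ici j, mE.comap (X i)) P :=
  indep_iSup_of_disjoint (fun i => (hX i).comap_le) h.iIndep (Set.Iio_disjoint_Ici le_rfl)

theorem ProbabilityTheory.iIndepFun.indepFun_sum_range_sum_Ico [AddCommMonoid E]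
    [MeasurableAdd₂ E] (hX : ∀ i, Measurable (X i)) (h : iIndepFun X P) {j n : ℕ} :
    IndepFun (fun ω => ∑ i ∈ Finset.range j, X i ω) (fun ω => ∑ i ∈ Finset.Ico j n, X i ω) P := by
  rw [IndepFun_iff_Indep]
  refine indep_of_indep_of_le_right (indep_of_indep_of_le_left
    (h.indep_iSup_comap_Iio_Ici hX j) ?_) ?_
  · exact (measurable_sum_iSup_comap fun i hi => Finset.mem_range.mp hi).comap_le
  · exact (measurable_sum_iSup_comap fun i hi => (Finset.mem_Ico.mp hi).1).comap_le

theorem exists_measure_add_mem_le_of_indepFun [IsProbabilityMeasure P] [Add E] [MeasurableAdd₂ E]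
    {Y Z : Ω → E} (hY : Measurable Y) (hZ : Measurable Z) (hYZ : IndepFun Y Z P) {s : Set E}
    (hs : MeasurableSet s) : ∃ z, P {ω | Y ω + z ∈ s} ≤ P {ω | Y ω + Z ω ∈ s} := by
  have : IsProbabilityMeasure (P.map Z) := Measure.isProbabilityMeasure_map hZ.aemeasurable
  have hA : MeasurableSet {p : E × E | p.1 + p.2 ∈ s} := measurable_add hs
  have hsum : P {ω | Y ω + Z ω ∈ s} = ∫⁻ z, P.map Y ((·, z) ⁻¹' {p | p.1 + p.2 ∈ s}) ∂P.map Z := by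
    rw [← Measure.prod_apply_symm hA, ← (indepFun_iff_map_prod_eq_prod_map_map hY.aemeasurable
      hZ.aemeasurable).mp hYZ, Measure.map_apply (hY.prodMk hZ) hA]
    rfl
  obtain ⟨z, hz⟩ := exists_le_lintegral (μ := P.map Z)
    (measurable_measure_prodMk_right (μ := P.map Y) hA).aemeasurable
  refine ⟨z, ?_⟩
  calc P {ω | Y ω + z ∈ s} = P.map Y ((·, z) ⁻¹' {p | p.1 + p.2 ∈ s}) :=
        (Measure.map_apply hY (hs.preimage (measurable_add_const z))).symm
    _ ≤ P {ω | Y ω + Z ω ∈ s} := hsum ▸ hz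

theorem identDistrib_sum_Ico_sum_range_s4 [AddCommMonoid E] [MeasurableAdd₂ E]
    (hindep : iIndepFun X P) (hid : ∀ i, IdentDistrib (X i) (X 0) P P) (a k : ℕ) :
    IdentDistrib (fun ω => ∑ i ∈ Finset.Ico a (a + k), X i ω)
      (fun ω => ∑ i ∈ Finset.range k, X i ω) P P := by
  have hshift : IdentDistrib (fun ω i => X (a + i) ω) (fun ω i => X i ω) P P :=
    IdentDistrib.pi (fun i => (hid (a + i)).trans (hid i).symm)
      (hindep.precomp (add_right_injective a)) hindep
  convert hshift.comp (u := fun v : ℕ → E => ∑ i ∈ Finset.range k, v i)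
    (Finset.measurable_sum _ fun i _ => measurable_pi_apply i) using 1
  · ext ω
    simp [Finset.sum_Ico_eq_sum_range]
  · rfl

theorem mul_measure_biUnion_le_of_disjointed {F G : ℕ → Set Ω} {B : Set Ω} {β : ℝ≥0∞} {n : ℕ}
    (hF : ∀ j, MeasurableSet (F j)) (hG : ∀ j, MeasurableSet (G j))
    (hFG : ∀ j ≤ n, β * P (disjointed F j) ≤ P (disjointed F j ∩ G j))
    (hB : ∀ j ≤ n, F j ∩ G j ⊆ B) :
    β * P (⋃ j ≤ n, F j) ≤ P B := by
  have hdisj : (Finset.Iic n : Set ℕ).PairwiseDisjoint (disjointed F) :=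
    (disjoint_disjointed F).set_pairwise _
  have hU : ⋃ j ≤ n, F j = ⋃ j ∈ Finset.Iic n, disjointed F j := by
    rw [biUnion_Iic_disjointed, partialSups_eq_biSup]
    rfl
  rw [hU]
  calc β * P (⋃ j ∈ Finset.Iic n, disjointed F j)
      = ∑ j ∈ Finset.Iic n, β * P (disjointed F j) := by
        rw [measure_biUnion_finset hdisj fun j _ => MeasurableSet.disjointed hF j, Finset.mul_sum]
    _ ≤ ∑ j ∈ Finset.Iic n, P (disjointed F j ∩ G j) :=
        Finset.sum_le_sum fun j hj => hFG j (Finset.mem_Iic.mp hj)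
    _ = P (⋃ j ∈ Finset.Iic n, disjointed F j ∩ G j) :=
        (measure_biUnion_finset (hdisj.mono_on fun j _ => Set.inter_subset_left)
          fun j _ => (MeasurableSet.disjointed hF j).inter (hG j)).symm
    _ ≤ P B := measure_mono <| Set.iUnion₂_subset fun j hj =>
        (Set.inter_subset_inter_left _ (disjointed_subset F j)).trans (hB j (Finset.mem_Iic.mp hj))

theorem ottaviani_ineq [NormedAddCommGroup E] [MeasurableAdd₂ E] [OpensMeasurableSpace E]
    (hX : ∀ i, Measurable (X i)) (hindep : iIndepFun X P) (n : ℕ) (t r : ℝ) {β : ℝ≥0∞}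
    (hβ : ∀ j ≤ n, β ≤ P {ω | ‖∑ i ∈ Finset.Ico j n, X i ω‖ ≤ r}) :
    β * P {ω | ∃ j ≤ n, t < ‖∑ i ∈ Finset.range j, X i ω‖} ≤
      P {ω | t - r < ‖∑ i ∈ Finset.range n, X i ω‖} := by
  set F : ℕ → Set Ω := fun j => {ω | t < ‖∑ i ∈ Finset.range j, X i ω‖}
  set G : ℕ → Set Ω := fun j => {ω | ‖∑ i ∈ Finset.Ico j n, X i ω‖ ≤ r}
  have hF : ∀ j, MeasurableSet (F j) := fun j =>
    measurableSet_lt measurable_const (Finset.measurable_sum _ fun i _ => hX i).norm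
  have hG : ∀ j, MeasurableSet (G j) := fun j =>
    measurableSet_le (Finset.measurable_sum _ fun i _ => hX i).norm measurable_const
  have hcover : {ω | ∃ j ≤ n, t < ‖∑ i ∈ Finset.range j, X i ω‖} = ⋃ j ≤ n, F j := by
    ext ω
    simp [F]
  rw [hcover]
  refine mul_measure_biUnion_le_of_disjointed hF hG (fun j hj => ?_) fun j hj ω ⟨hωF, hωG⟩ => ?_
  · have hpast : ∀ k ≤ j, MeasurableSet[⨆ i ∈ Set.Iio j, mE.comap (X i)] (F k) := fun k hk =>
      measurable_norm.comp (measurable_sum_iSup_comap fun i hi =>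
        (Finset.mem_range.mp hi).trans_le hk) measurableSet_Ioi
    have hfuture : MeasurableSet[⨆ i ∈ Set.Ici j, mE.comap (X i)] (G j) :=
      measurable_norm.comp (measurable_sum_iSup_comap fun i hi => (Finset.mem_Ico.mp hi).1)
        measurableSet_Iic
    rw [(Indep_iff _ _ P).1 (hindep.indep_iSup_comap_Iio_Ici hX j) _ _
      (disjointed_eq_inter_compl F j ▸ (hpast j le_rfl).inter
        (.iInter fun k => .iInter fun hk => (hpast k hk.le).compl)) hfuture, mul_comm]
    gcongr
    exact hβ j hj
  · have hSj : t < ‖∑ i ∈ Finset.range j, X i ω‖ := hωF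
    have hB : ‖∑ i ∈ Finset.Ico j n, X i ω‖ ≤ r := hωG
    have := norm_le_norm_add_norm_sub (∑ i ∈ Finset.range n, X i ω) (∑ i ∈ Finset.range j, X i ω)
    rw [← Finset.sum_Ico_eq_sub _ hj] at this
    show t - r < _
    linarith

theorem exists_notMem_of_measure_lt_one [IsProbabilityMeasure P] {A : Set Ω} (h : P A < 1) :
    ∃ ω, ω ∉ A := by
  by_contra! hA
  rw [Set.eq_univ_of_forall hA, measure_univ] at h
  exact lt_irrefl 1 h

theorem exists_shift_measure_sum_Ico_add_mem_le [IsProbabilityMeasure P] [AddCommMonoid E]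
    [MeasurableAdd₂ E] (hX : ∀ i, Measurable (X i)) (hindep : iIndepFun X P)
    (hid : ∀ i, IdentDistrib (X i) (X 0) P P) (n : ℕ) {s : Set E} (hs : MeasurableSet s) :
    ∃ d : ℕ → E, ∀ a k, a + k ≤ n →
      P {ω | ∑ i ∈ Finset.Ico a (a + k), X i ω + d k ∈ s} ≤
        P {ω | ∑ i ∈ Finset.range n, X i ω ∈ s} := by
  have hshift : ∀ k, ∃ z, k ≤ n →
      P {ω | ∑ i ∈ Finset.range k, X i ω + z ∈ s} ≤ P {ω | ∑ i ∈ Finset.range n, X i ω ∈ s} := by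
    intro k
    by_cases hk : k ≤ n
    · obtain ⟨z, hz⟩ := exists_measure_add_mem_le_of_indepFun
        (Finset.measurable_sum _ fun i _ => hX i) (Finset.measurable_sum _ fun i _ => hX i)
        (hindep.indepFun_sum_range_sum_Ico hX (j := k) (n := n)) hs
      exact ⟨z, fun _ => by simpa only [Finset.sum_range_add_sum_Ico _ hk] using hz⟩
    · exact ⟨0, fun h => absurd h hk⟩
  choose d hd using hshift
  refine ⟨d, fun a k hak => ?_⟩
  calc P {ω | ∑ i ∈ Finset.Ico a (a + k), X i ω + d k ∈ s}
      = P {ω | ∑ i ∈ Finset.range k, X i ω + d k ∈ s} :=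
        ((identDistrib_sum_Ico_sum_range_s4 hindep hid a k).comp
          (measurable_add_const (d k))).measure_mem_eq hs
    _ ≤ P {ω | ∑ i ∈ Finset.range n, X i ω ∈ s} := hd k (by omega)

section Shift

variable [IsProbabilityMeasure P] [NormedAddCommGroup E] {n : ℕ} {t₀ : ℝ} {ε : ℝ≥0∞}
  {d : ℕ → E}

theorem norm_shift_add_sub_sub_le
    (hd : ∀ a k, a + k ≤ n → P {ω | t₀ < ‖∑ i ∈ Finset.Ico a (a + k), X i ω + d k‖} ≤ ε)
    (hε : 3 * ε < 1) {j k : ℕ} (hjk : j + k ≤ n) : ‖d (j + k) - d j - d k‖ ≤ 3 * t₀ := by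
  have hd₀ : ∀ k ≤ n, P {ω | t₀ < ‖∑ i ∈ Finset.Ico 0 k, X i ω + d k‖} ≤ ε := fun k hk => by
    simpa only [zero_add] using hd 0 k (by omega)
  obtain ⟨ω, hω⟩ := exists_notMem_of_measure_lt_one (P := P)
    (A := {ω | t₀ < ‖∑ i ∈ Finset.Ico 0 j, X i ω + d j‖} ∪
      {ω | t₀ < ‖∑ i ∈ Finset.Ico j (j + k), X i ω + d k‖} ∪
      {ω | t₀ < ‖∑ i ∈ Finset.Ico 0 (j + k), X i ω + d (j + k)‖}) <| by
    refine lt_of_le_of_lt ?_ hε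
    calc _ ≤ ε + ε + ε := (measure_union_le _ _).trans (add_le_add
          ((measure_union_le _ _).trans (add_le_add (hd₀ j (by omega)) (hd j k hjk)))
          (hd₀ (j + k) hjk))
      _ = 3 * ε := by ring
  simp only [Set.mem_union, Set.mem_ofPred_eq, not_or, not_lt] at hω
  obtain ⟨⟨h₁, h₂⟩, h₃⟩ := hω
  set A := ∑ i ∈ Finset.Ico 0 j, X i ω
  set B := ∑ i ∈ Finset.Ico j (j + k), X i ω
  have hAB : ∑ i ∈ Finset.Ico 0 (j + k), X i ω = A + B :=
    (Finset.sum_Ico_consecutive _ (Nat.zero_le j) (Nat.le_add_right j k)).symm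
  rw [hAB] at h₃
  calc ‖d (j + k) - d j - d k‖ = ‖(A + B + d (j + k)) - (A + d j) - (B + d k)‖ := by
        congr 1; abel
    _ ≤ ‖(A + B + d (j + k)) - (A + d j)‖ + ‖B + d k‖ := norm_sub_le _ _
    _ ≤ 3 * t₀ := by linarith [norm_sub_le (A + B + d (j + k)) (A + d j)]

theorem norm_shift_le
    (hd : ∀ a k, a + k ≤ n → P {ω | t₀ < ‖∑ i ∈ Finset.Ico a (a + k), X i ω + d k‖} ≤ ε)
    (hS : P {ω | t₀ < ‖∑ i ∈ Finset.range n, X i ω‖} ≤ ε) (hε : 2 * ε < 1) :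
    ‖d n‖ ≤ 2 * t₀ := by
  have hdn := hd 0 n (by omega)
  rw [zero_add, ← Finset.range_eq_Ico] at hdn
  obtain ⟨ω, hω⟩ := exists_notMem_of_measure_lt_one (P := P)
    (A := {ω | t₀ < ‖∑ i ∈ Finset.range n, X i ω‖} ∪
      {ω | t₀ < ‖∑ i ∈ Finset.range n, X i ω + d n‖}) <| by
    refine lt_of_le_of_lt ?_ hε
    calc _ ≤ ε + ε := (measure_union_le _ _).trans (add_le_add hS hdn)
      _ = 2 * ε := by ring
  simp only [Set.mem_union, Set.mem_ofPred_eq, not_or, not_lt] at hω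
  have := norm_sub_le (∑ i ∈ Finset.range n, X i ω + d n) (∑ i ∈ Finset.range n, X i ω)
  rw [add_sub_cancel_left] at this
  linarith [hω.1, hω.2]

end Shift

theorem measure_exists_norm_sum_range_gt_le_two_mul [IsProbabilityMeasure P]
    [NormedAddCommGroup E] [NormedSpace ℝ E] [MeasurableAdd₂ E] [OpensMeasurableSpace E]
    (hX : ∀ i, Measurable (X i)) (hindep : iIndepFun X P)
    (hid : ∀ i, IdentDistrib (X i) (X 0) P P) (n : ℕ) (t₀ : ℝ)
    (hε : 3 * P {ω | t₀ < ‖∑ i ∈ Finset.range n, X i ω‖} < 1) :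
    P {ω | ∃ j ≤ n, 16 * t₀ < ‖∑ i ∈ Finset.range j, X i ω‖} ≤
      2 * P {ω | t₀ < ‖∑ i ∈ Finset.range n, X i ω‖} := by
  set ε := P {ω | t₀ < ‖∑ i ∈ Finset.range n, X i ω‖}
  obtain ⟨d, hd⟩ : ∃ d : ℕ → E, ∀ a k, a + k ≤ n →
      P {ω | t₀ < ‖∑ i ∈ Finset.Ico a (a + k), X i ω + d k‖} ≤ ε :=
    exists_shift_measure_sum_Ico_add_mem_le hX hindep hid n
      (measurableSet_lt measurable_const measurable_norm)
  have hd_le : ∀ k ≤ n, ‖d k‖ ≤ 14 * t₀ := fun k hk => by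
    have hdn := norm_shift_le hd le_rfl (lt_of_le_of_lt (by gcongr; norm_num) hε)
    linarith [norm_le_norm_add_of_quasiAdditive (fun j k => norm_shift_add_sub_sub_le hd hε) hk]
  have htail : ∀ j ≤ n, 1 - ε ≤ P {ω | ‖∑ i ∈ Finset.Ico j n, X i ω‖ ≤ 15 * t₀} := by
    intro j hj
    have hbad := hd j (n - j) (by omega)
    rw [Nat.add_sub_cancel' hj] at hbad
    calc 1 - ε ≤ 1 - P {ω | t₀ < ‖∑ i ∈ Finset.Ico j n, X i ω + d (n - j)‖} :=
          tsub_le_tsub_left hbad 1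
      _ = P {ω | t₀ < ‖∑ i ∈ Finset.Ico j n, X i ω + d (n - j)‖}ᶜ :=
          (prob_compl_eq_one_sub (measurableSet_lt measurable_const
            ((Finset.measurable_sum _ fun i _ => hX i).add_const _).norm)).symm
      _ ≤ P {ω | ‖∑ i ∈ Finset.Ico j n, X i ω‖ ≤ 15 * t₀} := by
          refine measure_mono fun ω hω => ?_
          simp only [Set.mem_compl_iff, Set.mem_ofPred_eq, not_lt] at hω ⊢
          have := norm_sub_le (∑ i ∈ Finset.Ico j n, X i ω + d (n - j)) (d (n - j))
          rw [add_sub_cancel_right] at this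
          linarith [hd_le (n - j) (Nat.sub_le n j)]
  have hott := ottaviani_ineq hX hindep n (16 * t₀) (15 * t₀) htail
  rw [show 16 * t₀ - 15 * t₀ = t₀ by ring] at hott
  set M := P {ω | ∃ j ≤ n, 16 * t₀ < ‖∑ i ∈ Finset.range j, X i ω‖}
  calc M = (1 - ε + ε) * M := by rw [tsub_add_cancel_of_le prob_le_one, one_mul]
    _ = (1 - ε) * M + ε * M := add_mul _ _ _
    _ ≤ ε + ε * 1 := add_le_add hott (by gcongr; exact prob_le_one)
    _ = 2 * ε := by ring

end PartialSums

/-- Corollary 4: there is a universal constant `c > 0` such that for i.i.d. Banach-space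
valued random variables with partial sums `S_j`, every `k ≥ 1` and `t > 0`,
`P(sup_{1 ≤ j ≤ k} ‖S_j‖ > t) ≤ c P(‖S_k‖ > t/c)`. -/
theorem maximal_inequality_iid :
    ∃ c : ℝ, 0 < c ∧
      ∀ (Ω : Type) (_ : MeasurableSpace Ω) (P : Measure Ω), IsProbabilityMeasure P →
      ∀ (E : Type) [NormedAddCommGroup E] [NormedSpace ℝ E] [CompleteSpace E]
        [MeasurableSpace E] [BorelSpace E] [SecondCountableTopology E]
        (X : ℕ → Ω → E), (∀ i, Measurable (X i)) →
        iIndepFun X P →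
        (∀ i, IdentDistrib (X i) (X 0) P P) →
        ∀ (k : ℕ), 1 ≤ k → ∀ (t : ℝ), 0 < t →
          P {ω | ∃ j, 1 ≤ j ∧ j ≤ k ∧ t < ‖∑ i ∈ Finset.range j, X i ω‖} ≤
            ENNReal.ofReal c * P {ω | t / c < ‖∑ i ∈ Finset.range k, X i ω‖} := by
  refine ⟨16, by norm_num, ?_⟩
  intro Ω _ P _ E _ _ _ _ _ _ X hX hindep hid k _ t _
  set ε := P {ω | t / 16 < ‖∑ i ∈ Finset.range k, X i ω‖}
  have hmax : P {ω | ∃ j, 1 ≤ j ∧ j ≤ k ∧ t < ‖∑ i ∈ Finset.range j, X i ω‖} ≤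
      P {ω | ∃ j ≤ k, 16 * (t / 16) < ‖∑ i ∈ Finset.range j, X i ω‖} := by
    refine measure_mono fun ω ⟨j, _, hjk, hj⟩ => ⟨j, hjk, ?_⟩
    rwa [mul_div_cancel₀ t (by norm_num)]
  rw [ENNReal.ofReal_ofNat]
  by_cases hε : 3 * ε < 1
  · calc _ ≤ 2 * ε := hmax.trans
          (measure_exists_norm_sum_range_gt_le_two_mul hX hindep hid k (t / 16) hε)
      _ ≤ 16 * ε := by gcongr; norm_num
  · calc _ ≤ 1 := prob_le_one
      _ ≤ 3 * ε := not_lt.mp hε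
      _ ≤ 16 * ε := by gcongr; norm_num
end

section
/- There exist universal constants $c_1, c_2 > 0$ such that for every sequence $X_1, X_2, \dots$ of independent identically distributed random variables with values in a Banach space, with partial sums $S_j = \sum_{i=1}^j X_i$, all integers $1 \le k \le j$, and all $t > 0$, $\Pr(\|S_j\| > t) \le c_1 \frac{j}{k}\, \Pr\big(\|S_k\| > \frac{k t}{c_2 j}\big)$. -/
open MeasureTheory ProbabilityTheory
open scoped ENNReal

/-!
Put `s = k t / (20 j)` and `p = P (‖S_k‖ > s)`; if `3 p ≥ 1` there is nothing to prove.
Otherwise `S_k` is concentrated, and then so is every shorter sum, up to a shift: as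
`S_k = S_r + (S_k - S_r)` with independent summands, some `a_r` has `P (‖S_r - a_r‖ > s) ≤ p`.
Three events of probability `≤ p < 1/3` cannot cover `Ω`, which makes `r ↦ a_r` additive up
to `3 s`; together with `a_k = 0` this forces `‖a_r‖ ≤ 9 s`, so `P (‖S_B‖ > 10 s) ≤ p` for
every set `B` of at most `k` indices. Cutting `range j` into `j / k + 1 ≤ 2 j / k` blocks of at
most `k` consecutive indices, `‖S_j‖ > t` forces one block sum to exceed `10 s`, and a union
bound gives the claim with `c₁ = 3`, `c₂ = 20`.
-/

open Finset

lemma Nat.div_add_one_mul_le_two_mul {j k : ℕ} (hkj : k ≤ j) : (j / k + 1) * k ≤ 2 * j := by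
  have := Nat.div_mul_le_self j k
  rw [add_mul, one_mul]
  omega

lemma Finset.sum_range_sum_Ico_of_monotone {M : Type*} [AddCommMonoid M] (f : ℕ → M)
    {b : ℕ → ℕ} (hb : Monotone b) (m : ℕ) :
    ∑ l ∈ range m, ∑ i ∈ Ico (b l) (b (l + 1)), f i = ∑ i ∈ Ico (b 0) (b m), f i := by
  induction m with
  | zero => simp
  | succ m ih => rw [sum_range_succ, ih, sum_Ico_consecutive _ (hb m.zero_le) (hb m.le_succ)]

lemma MeasureTheory.measure_lt_norm_sum_le {Ω ι E : Type*} [MeasurableSpace Ω] {P : Measure Ω}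
    [SeminormedAddCommGroup E] (L : Finset ι) (Y : ι → Ω → E) {c : ℝ} {q : ℝ≥0∞}
    (hY : ∀ l ∈ L, P {ω | c < ‖Y l ω‖} ≤ q) :
    P {ω | #L * c < ‖∑ l ∈ L, Y l ω‖} ≤ #L * q := by
  have hsub : {ω | #L * c < ‖∑ l ∈ L, Y l ω‖} ⊆ ⋃ l ∈ L, {ω | c < ‖Y l ω‖} := by
    intro ω hω
    by_contra hnot
    simp only [Set.mem_iUnion, Set.mem_ofPred_eq, not_exists, not_lt] at hω hnot
    have := (norm_sum_le L (Y · ω)).trans (sum_le_sum hnot)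
    simp only [sum_const, nsmul_eq_mul] at this
    linarith
  calc P {ω | #L * c < ‖∑ l ∈ L, Y l ω‖} ≤ ∑ l ∈ L, P {ω | c < ‖Y l ω‖} :=
        (measure_mono hsub).trans (measure_biUnion_finset_le L _)
  _ ≤ #L * q := by simpa using sum_le_sum hY

lemma measure_lt_norm_sum_range_le_of_blocks {Ω E : Type*} [MeasurableSpace Ω] {P : Measure Ω}
    [SeminormedAddCommGroup E] (X : ℕ → Ω → E) {j k : ℕ} (hk : 0 < k) {c t : ℝ} {q : ℝ≥0∞}
    (hct : (j / k + 1 : ℕ) * c ≤ t)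
    (hblock : ∀ B : Finset ℕ, #B ≤ k → P {ω | c < ‖∑ i ∈ B, X i ω‖} ≤ q) :
    P {ω | t < ‖∑ i ∈ range j, X i ω‖} ≤ (j / k + 1 : ℕ) * q := by
  let b l := min (l * k) j
  have hb : Monotone b := fun l l' h ↦ min_le_min_right _ (Nat.mul_le_mul_right k h)
  have hbj : b (j / k + 1) = j := min_eq_right (Nat.lt_mul_of_div_lt (Nat.lt_succ_self _) hk).le
  have hsplit : ∀ ω, ∑ i ∈ range j, X i ω
      = ∑ l ∈ range (j / k + 1), ∑ i ∈ Ico (b l) (b (l + 1)), X i ω := fun ω ↦ by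
    rw [sum_range_sum_Ico_of_monotone _ hb, hbj]; simp [b]
  have hcard : ∀ l, #(Ico (b l) (b (l + 1))) ≤ k := fun l ↦ by
    simp only [Nat.card_Ico, b, add_mul, one_mul]; omega
  have hunion := measure_lt_norm_sum_le (range (j / k + 1))
    (fun l ω ↦ ∑ i ∈ Ico (b l) (b (l + 1)), X i ω) fun l _ ↦ hblock _ (hcard l)
  simp only [← hsplit, card_range] at hunion
  exact (measure_mono fun ω hω ↦ hct.trans_lt hω).trans hunion

lemma MeasureTheory.exists_notMem_of_measure_le {Ω : Type*} [MeasurableSpace Ω] {P : Measure Ω}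
    [IsProbabilityMeasure P] {A B C : Set Ω} {p : ℝ≥0∞} (hp : 3 * p < 1)
    (hA : P A ≤ p) (hB : P B ≤ p) (hC : P C ≤ p) : ∃ ω, ω ∉ A ∧ ω ∉ B ∧ ω ∉ C := by
  by_contra! hcover
  have : (1 : ℝ≥0∞) ≤ 3 * p :=
    calc 1 = P Set.univ := measure_univ.symm
    _ ≤ P (A ∪ B ∪ C) := measure_mono fun ω _ ↦ by
          by_contra h
          simp only [Set.mem_union, not_or] at h
          exact h.2 (hcover ω h.1.1 h.1.2)
    _ ≤ P A + P B + P C := (measure_union_le _ _).trans (by gcongr; exact measure_union_le _ _)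
    _ ≤ p + p + p := by gcongr
    _ = 3 * p := by ring
  exact absurd hp this.not_gt

lemma norm_le_three_mul_of_norm_add_sub_le {E : Type*} [SeminormedAddCommGroup E]
    [NormedSpace ℝ E] {a : ℕ → E} {k : ℕ} {δ : ℝ} (hk : a k = 0)
    (hadd : ∀ m n, m + n ≤ k → ‖a (m + n) - a m - a n‖ ≤ δ) {r : ℕ} (hr : r ≤ k) :
    ‖a r‖ ≤ 3 * δ := by
  obtain ⟨r₀, hr₀, hmax⟩ := exists_max_image (range (k + 1)) (‖a ·‖) nonempty_range_add_one
  have hr₀k : r₀ ≤ k := mem_range_succ_iff.1 hr₀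
  have hmax' : ∀ n ≤ k, ‖a n‖ ≤ ‖a r₀‖ := fun n hn ↦ hmax n (mem_range_succ_iff.2 hn)
  have hdouble : ∀ n, n + n ≤ k → 2 * ‖a n‖ ≤ ‖a r₀‖ + δ := fun n hn ↦
    calc 2 * ‖a n‖ = ‖a (n + n) - (a (n + n) - a n - a n)‖ := by
          rw [show a (n + n) - (a (n + n) - a n - a n) = (2 : ℝ) • a n by rw [two_smul]; abel,
            norm_smul, Real.norm_two]
    _ ≤ ‖a (n + n)‖ + ‖a (n + n) - a n - a n‖ := norm_sub_le _ _
    _ ≤ ‖a r₀‖ + δ := add_le_add (hmax' _ hn) (hadd n n hn)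
  suffices ‖a r₀‖ ≤ 3 * δ from (hmax' r hr).trans this
  rcases le_or_gt (r₀ + r₀) k with hsmall | hlarge
  · linarith [hdouble r₀ hsmall, (norm_nonneg _).trans (hadd 0 0 (by omega))]
  · -- As `a k = 0`, the value at `r₀` is controlled by the one at `k - r₀ ≤ k / 2`.
    have hsum : r₀ + (k - r₀) = k := by omega
    have hcompl : ‖a r₀‖ ≤ δ + ‖a (k - r₀)‖ :=
      calc ‖a r₀‖ = ‖a (r₀ + (k - r₀)) - a r₀ - a (k - r₀) - (- a (k - r₀))‖ := by
            rw [hsum, hk]; simp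
      _ ≤ ‖a (r₀ + (k - r₀)) - a r₀ - a (k - r₀)‖ + ‖-a (k - r₀)‖ := norm_sub_le _ _
      _ ≤ δ + ‖a (k - r₀)‖ := by rw [norm_neg]; gcongr; exact hadd _ _ hsum.le
    linarith [hdouble (k - r₀) (by omega)]

namespace ProbabilityTheory

variable {Ω ι E : Type*} [MeasurableSpace Ω] {P : Measure Ω}
  [AddCommMonoid E] [MeasurableSpace E] [MeasurableAdd₂ E] {X : ι → Ω → E}

lemma iIndepFun.indepFun_finsetSum_finsetSum (hind : iIndepFun X P) (hX : ∀ i, Measurable (X i))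
    {S T : Finset ι} (hST : Disjoint S T) :
    IndepFun (fun ω ↦ ∑ i ∈ S, X i ω) (fun ω ↦ ∑ i ∈ T, X i ω) P := by
  have hsum : ∀ U : Finset ι, Measurable fun x : U → E ↦ ∑ i, x i :=
    fun U ↦ Finset.measurable_sum _ fun i _ ↦ measurable_pi_apply i
  convert (hind.indepFun_finset S T hST hX).comp (hsum S) (hsum T) using 1 <;> ext ω
  exacts [(Finset.sum_coe_sort S (X · ω)).symm, (Finset.sum_coe_sort T (X · ω)).symm]

lemma identDistrib_finsetSum_of_card_eq (hind : iIndepFun X P)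
    (hident : ∀ i j, IdentDistrib (X i) (X j) P P) {S T : Finset ι} (hST : #S = #T) :
    IdentDistrib (fun ω ↦ ∑ i ∈ S, X i ω) (fun ω ↦ ∑ i ∈ T, X i ω) P P := by
  let e : S ≃ T := Fintype.equivOfCardEq (by simpa using hST)
  have hpi : IdentDistrib (fun ω (i : S) ↦ X i ω) (fun ω (i : S) ↦ X (e i) ω) P P :=
    IdentDistrib.pi (fun i ↦ hident i (e i))
      (hind.precomp Subtype.val_injective)
      (hind.precomp (Subtype.val_injective.comp e.injective))
  have hsum : Measurable fun x : S → E ↦ ∑ i, x i :=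
    Finset.measurable_sum _ fun i _ ↦ measurable_pi_apply i
  convert hpi.comp hsum using 1
  · ext ω; exact (Finset.sum_coe_sort S (X · ω)).symm
  · ext ω; exact ((e.sum_comp fun i : T ↦ X i ω).trans (Finset.sum_coe_sort T (X · ω))).symm

end ProbabilityTheory

namespace ProbabilityTheory.IndepFun

variable {Ω E : Type*} [MeasurableSpace Ω] {P : Measure Ω} [IsProbabilityMeasure P]
  [Add E] [MeasurableSpace E] [MeasurableAdd₂ E]

/-- Conditioning on `V`, `P (U + V ∈ A)` is an average of the `P (U + y ∈ A)`. -/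
lemma exists_measure_add_const_mem_le {U V : Ω → E} (hU : Measurable U) (hV : Measurable V)
    (hUV : IndepFun U V P) {A : Set E} (hA : MeasurableSet A) :
    ∃ y, P {ω | U ω + y ∈ A} ≤ P {ω | U ω + V ω ∈ A} := by
  have hA' : MeasurableSet {z : E × E | z.1 + z.2 ∈ A} := measurable_add hA
  have : IsProbabilityMeasure (P.map U) := Measure.isProbabilityMeasure_map hU.aemeasurable
  have : IsProbabilityMeasure (P.map V) := Measure.isProbabilityMeasure_map hV.aemeasurable
  obtain ⟨y, hy⟩ := exists_le_lintegral (μ := P.map V)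
    (measurable_measure_prodMk_right (μ := P.map U) hA').aemeasurable
  refine ⟨y, ?_⟩
  calc P {ω | U ω + y ∈ A} = P.map U ((fun x ↦ (x, y)) ⁻¹' {z : E × E | z.1 + z.2 ∈ A}) :=
        (Measure.map_apply hU (measurable_add_const y hA)).symm
  _ ≤ (P.map U).prod (P.map V) {z : E × E | z.1 + z.2 ∈ A} := by
        rwa [Measure.prod_apply_symm hA']
  _ = P {ω | U ω + V ω ∈ A} := by
        rw [← (indepFun_iff_map_prod_eq_prod_map_map hU.aemeasurable hV.aemeasurable).1 hUV,
          Measure.map_apply (hU.prodMk hV) hA']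
        rfl

end ProbabilityTheory.IndepFun

section PartialSums

variable {Ω E : Type*} [MeasurableSpace Ω] {P : Measure Ω}
  [NormedAddCommGroup E] [MeasurableSpace E] [BorelSpace E]
  [SecondCountableTopology E] {X : ℕ → Ω → E}

lemma measure_lt_norm_finsetSum_sub_eq (hind : iIndepFun X P)
    (hident : ∀ i j, IdentDistrib (X i) (X j) P P) {S T : Finset ℕ} (hST : #S = #T) (s : ℝ)
    (c : E) : P {ω | s < ‖∑ i ∈ S, X i ω - c‖} = P {ω | s < ‖∑ i ∈ T, X i ω - c‖} :=
  ((identDistrib_finsetSum_of_card_eq hind hident hST).comp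
    (measurable_id.sub_const c).norm).measure_mem_eq measurableSet_Ioi

lemma exists_partialSum_centers (hind : iIndepFun X P) (hX : ∀ i, Measurable (X i)) (k : ℕ)
    (s : ℝ) :
    ∃ a : ℕ → E, a k = 0 ∧ ∀ r ≤ k,
      P {ω | s < ‖∑ i ∈ range r, X i ω - a r‖} ≤ P {ω | s < ‖∑ i ∈ range k, X i ω‖} := by
  have := hind.isProbabilityMeasure
  have hS : ∀ S : Finset ℕ, Measurable fun ω ↦ ∑ i ∈ S, X i ω :=
    fun S ↦ Finset.measurable_sum _ fun i _ ↦ hX i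
  have : ∀ r, ∃ c : E, (r = k → c = 0) ∧
      (r ≤ k → P {ω | s < ‖∑ i ∈ range r, X i ω - c‖} ≤ P {ω | s < ‖∑ i ∈ range k, X i ω‖}) := by
    intro r
    rcases eq_or_ne r k with rfl | hrk
    · exact ⟨0, fun _ ↦ rfl, fun _ ↦ by simp⟩
    obtain ⟨y, hy⟩ := IndepFun.exists_measure_add_const_mem_le (hS _) (hS _)
      (hind.indepFun_finsetSum_finsetSum hX
        (Nat.Ico_zero_eq_range r ▸ Ico_disjoint_Ico_consecutive 0 r k))
      (measurableSet_lt measurable_const measurable_norm : MeasurableSet {x : E | s < ‖x‖})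
    refine ⟨-y, fun h ↦ absurd h hrk, fun hr ↦ ?_⟩
    simpa only [Set.mem_ofPred_eq, sub_neg_eq_add, sum_range_add_sum_Ico _ hr] using hy
  choose a ha using this
  exact ⟨a, (ha k).1 rfl, fun r hr ↦ (ha r).2 hr⟩

lemma norm_partialSum_center_add_sub_le (hind : iIndepFun X P)
    (hident : ∀ i j, IdentDistrib (X i) (X j) P P) {k : ℕ} {s : ℝ}
    (hp : 3 * P {ω | s < ‖∑ i ∈ range k, X i ω‖} < 1) {a : ℕ → E}
    (ha : ∀ r ≤ k,
      P {ω | s < ‖∑ i ∈ range r, X i ω - a r‖} ≤ P {ω | s < ‖∑ i ∈ range k, X i ω‖})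
    {m n : ℕ} (hmn : m + n ≤ k) : ‖a (m + n) - a m - a n‖ ≤ 3 * s := by
  have := hind.isProbabilityMeasure
  have hshift : P {ω | s < ‖∑ i ∈ Ico m (m + n), X i ω - a n‖}
      ≤ P {ω | s < ‖∑ i ∈ range k, X i ω‖} := by
    rw [measure_lt_norm_finsetSum_sub_eq hind hident (T := range n) (by simp)]
    exact ha n (by omega)
  obtain ⟨ω, hsum, hfirst, hsecond⟩ :=
    exists_notMem_of_measure_le hp (ha (m + n) hmn) (ha m (by omega)) hshift
  simp only [Set.mem_ofPred_eq, not_lt] at hsum hfirst hsecond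
  have hsplit := sum_range_add_sum_Ico (X · ω) (Nat.le_add_right m n)
  calc ‖a (m + n) - a m - a n‖
      = ‖(∑ i ∈ range m, X i ω - a m) + (∑ i ∈ Ico m (m + n), X i ω - a n)
          - (∑ i ∈ range (m + n), X i ω - a (m + n))‖ := by rw [← hsplit]; congr 1; abel
  _ ≤ ‖∑ i ∈ range m, X i ω - a m‖ + ‖∑ i ∈ Ico m (m + n), X i ω - a n‖
        + ‖∑ i ∈ range (m + n), X i ω - a (m + n)‖ := norm_sub_le_of_le (norm_add_le _ _) le_rfl
  _ ≤ 3 * s := by linarith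

lemma measure_ten_mul_lt_norm_finsetSum_le [NormedSpace ℝ E] (hind : iIndepFun X P)
    (hX : ∀ i, Measurable (X i)) (hident : ∀ i j, IdentDistrib (X i) (X j) P P) {k : ℕ} {s : ℝ}
    (hp : 3 * P {ω | s < ‖∑ i ∈ range k, X i ω‖} < 1) {B : Finset ℕ} (hB : #B ≤ k) :
    P {ω | 10 * s < ‖∑ i ∈ B, X i ω‖} ≤ P {ω | s < ‖∑ i ∈ range k, X i ω‖} := by
  obtain ⟨a, hak, ha⟩ := exists_partialSum_centers hind hX k s
  have hbound : ‖a #B‖ ≤ 9 * s := by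
    have := norm_le_three_mul_of_norm_add_sub_le hak
      (fun m n hmn ↦ norm_partialSum_center_add_sub_le hind hident hp ha hmn) hB
    linarith
  calc P {ω | 10 * s < ‖∑ i ∈ B, X i ω‖} ≤ P {ω | s < ‖∑ i ∈ B, X i ω - a #B‖} :=
        measure_mono fun ω hω ↦ by
          simp only [Set.mem_ofPred_eq] at hω ⊢
          linarith [norm_sub_norm_le (∑ i ∈ B, X i ω) (a #B)]
  _ = P {ω | s < ‖∑ i ∈ range #B, X i ω - a #B‖} :=
        measure_lt_norm_finsetSum_sub_eq hind hident (by simp) s _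
  _ ≤ P {ω | s < ‖∑ i ∈ range k, X i ω‖} := ha _ hB

end PartialSums

/-- Corollary 6: there exist universal constants `c₁, c₂ > 0` such that for i.i.d.
Banach-space valued random variables with partial sums `S_j`, for `1 ≤ k ≤ j` and
`t > 0`, `P(‖S_j‖ > t) ≤ c₁ (j/k) P(‖S_k‖ > k t / (c₂ j))`. -/
theorem sums_iid_comparison_reverse :
    ∃ c₁ c₂ : ℝ, 0 < c₁ ∧ 0 < c₂ ∧
      ∀ (Ω : Type) (_ : MeasurableSpace Ω) (P : Measure Ω), IsProbabilityMeasure P →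
      ∀ (E : Type) [NormedAddCommGroup E] [NormedSpace ℝ E] [CompleteSpace E]
        [MeasurableSpace E] [BorelSpace E] [SecondCountableTopology E]
        (X : ℕ → Ω → E), (∀ i, Measurable (X i)) →
        iIndepFun X P →
        (∀ i, IdentDistrib (X i) (X 0) P P) →
        ∀ (j k : ℕ), 1 ≤ k → k ≤ j → ∀ (t : ℝ), 0 < t →
          P {ω | t < ‖∑ i ∈ Finset.range j, X i ω‖} ≤
            ENNReal.ofReal (c₁ * (j : ℝ) / (k : ℝ)) *
              P {ω | (k : ℝ) * t / (c₂ * (j : ℝ)) < ‖∑ i ∈ Finset.range k, X i ω‖} := by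
  refine ⟨3, 20, by norm_num, by norm_num, ?_⟩
  intro Ω _ P _ E _ _ _ _ _ _ X hX hind hid j k hk hkj t ht
  have hident : ∀ i i', IdentDistrib (X i) (X i') P P := fun i i' ↦ (hid i).trans (hid i').symm
  set s := (k : ℝ) * t / (20 * j) with hs
  set p := P {ω | s < ‖∑ i ∈ range k, X i ω‖}
  have hk0 : (0 : ℝ) < k := by exact_mod_cast hk
  have hkj' : (k : ℝ) ≤ j := by exact_mod_cast hkj
  have hj0 : (0 : ℝ) < j := hk0.trans_le hkj'
  have hm : ((j / k + 1 : ℕ) : ℝ) * k ≤ 2 * j := by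
    exact_mod_cast Nat.div_add_one_mul_le_two_mul hkj
  have hcoef : ∀ x : ℝ, x * k ≤ 3 * j → ENNReal.ofReal x ≤ ENNReal.ofReal (3 * j / k) :=
    fun x hx ↦ ENNReal.ofReal_le_ofReal ((le_div_iff₀ hk0).2 hx)
  have hscale : ((j / k + 1 : ℕ) : ℝ) * (10 * s) ≤ t := by
    rw [show ((j / k + 1 : ℕ) : ℝ) * (10 * s) = (j / k + 1 : ℕ) * k * t / (2 * j) by
      rw [hs]; field_simp; ring, div_le_iff₀ (by positivity)]
    nlinarith
  rcases lt_or_ge (3 * p) 1 with hp | hp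
  · calc P {ω | t < ‖∑ i ∈ range j, X i ω‖}
        ≤ (j / k + 1 : ℕ) * p := measure_lt_norm_sum_range_le_of_blocks X hk hscale
          fun B hB ↦ measure_ten_mul_lt_norm_finsetSum_le hind hX hident hp hB
    _ ≤ ENNReal.ofReal (3 * j / k) * p := by
          gcongr
          rw [← ENNReal.ofReal_natCast]
          exact hcoef _ (by linarith)
  · calc P {ω | t < ‖∑ i ∈ range j, X i ω‖} ≤ 3 * p := prob_le_one.trans hp
    _ ≤ ENNReal.ofReal (3 * j / k) * p := by
          gcongr
          simpa using hcoef 3 (by linarith)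
end

section
/- Let $X_1$ and $X_2$ be independent identically distributed random variables with values in a Banach space. Then for every $t > 0$, $\Pr(\|X_1\| > t) \le 5\, \Pr(\|X_1 + X_2\| > t/2)$. -/
/-!
Take `Y, Z` with `X₁, Y, Z` i.i.d. Since
`2 X₁ = (X₁ + Y) + (X₁ + Z) - (Y + Z)`, on the event `‖X₁‖ > t` one of the three pair sums has
norm `> 2t/3 > t/2`, and each pair sum is distributed as `X₁ + X₂`. A union bound gives the
inequality with constant `3`.
-/

open MeasureTheory ProbabilityTheory

theorem two_mul_norm_le_norm_add_add_norm_add_add_norm_add {E : Type*} [NormedAddCommGroup E]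
    [NormedSpace ℝ E] (x y z : E) :
    2 * ‖x‖ ≤ ‖x + y‖ + ‖x + z‖ + ‖y + z‖ :=
  calc 2 * ‖x‖ = ‖(x + y) + (x + z) - (y + z)‖ := by
        rw [show (x + y) + (x + z) - (y + z) = (2 : ℝ) • x by rw [two_smul]; abel, norm_smul,
          Real.norm_two]
    _ ≤ ‖(x + y) + (x + z)‖ + ‖y + z‖ := norm_sub_le _ _
    _ ≤ ‖x + y‖ + ‖x + z‖ + ‖y + z‖ := by gcongr; exact norm_add_le _ _

namespace MeasureTheory.Measure

variable {α β γ : Type*} [MeasurableSpace α] [MeasurableSpace β] [MeasurableSpace γ]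
  {μ : Measure α} {ν : Measure β} {ρ : Measure γ}

theorem map_prod_prod_fst_fst [SigmaFinite μ] [SigmaFinite ν] [IsProbabilityMeasure ρ] :
    (μ.prod (ν.prod ρ)).map (fun p => (p.1, p.2.1)) = μ.prod ν := by
  refine (prod_eq fun s u hs hu => ?_).symm
  rw [map_apply (by fun_prop) (hs.prod hu),
    show (fun p : α × β × γ => (p.1, p.2.1)) ⁻¹' (s ×ˢ u) = s ×ˢ (u ×ˢ Set.univ) by ext; simp,
    prod_prod, prod_prod, measure_univ, mul_one]

theorem map_prod_prod_fst_snd [SigmaFinite μ] [IsProbabilityMeasure ν] [SigmaFinite ρ] :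
    (μ.prod (ν.prod ρ)).map (fun p => (p.1, p.2.2)) = μ.prod ρ := by
  refine (prod_eq fun s u hs hu => ?_).symm
  rw [map_apply (by fun_prop) (hs.prod hu),
    show (fun p : α × β × γ => (p.1, p.2.2)) ⁻¹' (s ×ˢ u) = s ×ˢ (Set.univ ×ˢ u) by ext; simp,
    prod_prod, prod_prod, measure_univ, one_mul]

/-- The union bound over three independent samples `x, y, z` from `μ`. -/
theorem measure_le_three_mul_prod_of_forall_mem_or [IsProbabilityMeasure μ] {A : Set α}
    {B : Set (α × α)} (hB : MeasurableSet B)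
    (h : ∀ x ∈ A, ∀ y z, (x, y) ∈ B ∨ (x, z) ∈ B ∨ (y, z) ∈ B) :
    μ A ≤ 3 * μ.prod μ B := by
  set ν := μ.prod (μ.prod μ)
  have h_fst_fst : ν ((fun p => (p.1, p.2.1)) ⁻¹' B) = μ.prod μ B := by
    rw [← map_apply (by fun_prop) hB, map_prod_prod_fst_fst]
  have h_fst_snd : ν ((fun p => (p.1, p.2.2)) ⁻¹' B) = μ.prod μ B := by
    rw [← map_apply (by fun_prop) hB, map_prod_prod_fst_snd]
  have h_snd : ν (Prod.snd ⁻¹' B) = μ.prod μ B := by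
    rw [← map_apply measurable_snd hB, map_snd_prod, measure_univ, one_smul]
  have h_cover : A ×ˢ Set.univ ⊆ (fun p => (p.1, p.2.1)) ⁻¹' B ∪ (fun p => (p.1, p.2.2)) ⁻¹' B ∪
      Prod.snd ⁻¹' B := by
    rintro ⟨x, y, z⟩ ⟨hx, -⟩
    simpa [or_assoc] using h x hx y z
  calc μ A = ν (A ×ˢ Set.univ) := by rw [prod_prod, measure_univ, mul_one]
    _ ≤ ν ((fun p => (p.1, p.2.1)) ⁻¹' B) + ν ((fun p => (p.1, p.2.2)) ⁻¹' B) +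
        ν (Prod.snd ⁻¹' B) :=
        (measure_mono h_cover).trans <| (measure_union_le _ _).trans <|
          add_le_add_left (measure_union_le _ _) _
    _ = 3 * μ.prod μ B := by rw [h_fst_fst, h_fst_snd, h_snd]; ring

end MeasureTheory.Measure

theorem ProbabilityTheory.IndepFun.measure_preimage_eq_map_prod_map {Ω β : Type*}
    [MeasurableSpace Ω] [MeasurableSpace β] {P : Measure Ω} [IsProbabilityMeasure P]
    {X₁ X₂ : Ω → β} (hindep : IndepFun X₁ X₂ P) (hident : IdentDistrib X₁ X₂ P P)
    {B : Set (β × β)} (hB : MeasurableSet B) :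
    P ((fun ω => (X₁ ω, X₂ ω)) ⁻¹' B) = (P.map X₁).prod (P.map X₁) B := by
  rw [← Measure.map_apply_of_aemeasurable (hident.aemeasurable_fst.prodMk hident.aemeasurable_snd)
    hB, (indepFun_iff_map_prod_eq_prod_map_map hident.aemeasurable_fst
      hident.aemeasurable_snd).mp hindep, hident.map_eq]

theorem two_iid_comparison_general
    {Ω : Type*} [MeasurableSpace Ω] {P : Measure Ω} [IsProbabilityMeasure P]
    {E : Type*} [NormedAddCommGroup E] [NormedSpace ℝ E]
    [MeasurableSpace E] [BorelSpace E] [SecondCountableTopology E]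
    (X₁ X₂ : Ω → E)
    (hindep : IndepFun X₁ X₂ P) (hident : IdentDistrib X₁ X₂ P P)
    {t : ℝ} :
    P {ω | t < ‖X₁ ω‖} ≤ 5 * P {ω | t / 2 < ‖X₁ ω + X₂ ω‖} := by
  have := Measure.isProbabilityMeasure_map (μ := P) hident.aemeasurable_fst
  have hB : MeasurableSet {p : E × E | t / 2 < ‖p.1 + p.2‖} :=
    measurableSet_lt measurable_const (by fun_prop)
  have h_cover (x : E) (hx : t < ‖x‖) (y z : E) :
      t / 2 < ‖x + y‖ ∨ t / 2 < ‖x + z‖ ∨ t / 2 < ‖y + z‖ := by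
    by_contra! h
    linarith [two_mul_norm_le_norm_add_add_norm_add_add_norm_add x y z, norm_nonneg (x + y)]
  calc P {ω | t < ‖X₁ ω‖} = P.map X₁ {x | t < ‖x‖} :=
        (Measure.map_apply_of_aemeasurable hident.aemeasurable_fst
          (measurableSet_lt measurable_const measurable_norm)).symm
    _ ≤ 3 * (P.map X₁).prod (P.map X₁) {p : E × E | t / 2 < ‖p.1 + p.2‖} :=
        Measure.measure_le_three_mul_prod_of_forall_mem_or hB h_cover
    _ ≤ 5 * P {ω | t / 2 < ‖X₁ ω + X₂ ω‖} := by
        rw [← hindep.measure_preimage_eq_map_prod_map hident hB]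
        exact mul_le_mul_left (by norm_num) _

/-- The de la Peña–Montgomery-Smith inequality: if `X₁` and `X₂` are i.i.d. Banach-space
valued random variables, then `P(‖X₁‖ > t) ≤ 5 P(‖X₁ + X₂‖ > t/2)` for all `t > 0`. -/
theorem two_iid_comparison
    {Ω : Type*} [MeasurableSpace Ω] {P : Measure Ω} [IsProbabilityMeasure P]
    {E : Type*} [NormedAddCommGroup E] [NormedSpace ℝ E] [CompleteSpace E]
    [MeasurableSpace E] [BorelSpace E] [SecondCountableTopology E]
    (X₁ X₂ : Ω → E) (h₁ : Measurable X₁) (h₂ : Measurable X₂)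
    (hindep : IndepFun X₁ X₂ P) (hident : IdentDistrib X₁ X₂ P P)
    {t : ℝ} (ht : 0 < t) :
    P {ω | t < ‖X₁ ω‖} ≤ 5 * P {ω | t / 2 < ‖X₁ ω + X₂ ω‖} :=
  two_iid_comparison_general X₁ X₂ hindep hident
end

section
/- Let $X_1, X_2, \dots$ be independent identically distributed random variables with values in a Banach space, with partial sums $S_j = \sum_{i=1}^j X_i$. Let $k \ge 1$ and $t > 0$. If there exists $1 \le i \le k$ such that $S_i$ has no $(t/10)$-concentration point (i.e., $\Pr(\|S_i - x\| \le t/10) \le 2/3$ for every vector $x$), then $\Pr(\|S_k\| > t/10) \ge 1/3$. -/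
/-!
Split `S_k = (S_k - S_i) + S_i`. The two summands are independent, so the law of `S_k` is the
convolution of their laws, and the mass it gives to any closed ball is an average of masses that
the law of `S_i` gives to translated balls of the same radius. Each of those is at most `2/3`,
hence `P(‖S_k‖ ≤ t/10) ≤ 2/3`.
-/

open MeasureTheory ProbabilityTheory Metric
open scoped ENNReal

lemma MeasureTheory.Measure.conv_apply_le_of_forall_preimage_add_le {M : Type*} [AddMonoid M]
    [MeasurableSpace M] [MeasurableAdd₂ M] (μ ν : Measure M) [SFinite ν] {s : Set M}
    (hs : MeasurableSet s) {c : ℝ≥0∞} (h : ∀ x, ν ((x + ·) ⁻¹' s) ≤ c) :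
    (μ ∗ ν) s ≤ μ Set.univ * c :=
  calc (μ ∗ ν) s = ∫⁻ x, ν ((x + ·) ⁻¹' s) ∂μ := by
        rw [Measure.conv, Measure.map_apply measurable_add hs,
          Measure.prod_apply (measurable_add hs)]
        rfl
    _ ≤ ∫⁻ _, c ∂μ := lintegral_mono h
    _ = μ Set.univ * c := by rw [lintegral_const, mul_comm]

lemma ProbabilityTheory.iIndepFun.indepFun_finsetSum_finsetSum_s11 {ι Ω β : Type*}
    [MeasurableSpace Ω] {μ : Measure Ω}
    [AddCommMonoid β] [MeasurableSpace β] [MeasurableAdd₂ β] {f : ι → Ω → β}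
    (hf : iIndepFun f μ) (hmeas : ∀ i, Measurable (f i)) {s t : Finset ι}
    (hst : Disjoint s t) : IndepFun (∑ i ∈ s, f i) (∑ i ∈ t, f i) μ := by
  have hsum : ∀ u : Finset ι, Measurable fun v : u → β => ∑ j, v j :=
    fun u => Finset.measurable_sum _ fun j _ => measurable_pi_apply j
  convert (hf.indepFun_finset s t hst hmeas).comp (hsum s) (hsum t) using 1 <;>
    ext ω <;> simp [Finset.sum_apply, ← Finset.sum_attach s, ← Finset.sum_attach t]

lemma ProbabilityTheory.IndepFun.measure_add_preimage_closedBall_le {Ω E : Type*}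
    [MeasurableSpace Ω] {P : Measure Ω} [IsProbabilityMeasure P]
    [SeminormedAddCommGroup E] [MeasurableSpace E] [BorelSpace E] [SecondCountableTopology E]
    {T S : Ω → E} (hT : Measurable T) (hS : Measurable S) (hTS : IndepFun T S P) {r : ℝ}
    {c : ℝ≥0∞} (h : ∀ x, P (S ⁻¹' closedBall x r) ≤ c) (z : E) :
    P ((T + S) ⁻¹' closedBall z r) ≤ c := by
  have := Measure.isProbabilityMeasure_map (μ := P) hT.aemeasurable
  rw [← Measure.map_apply (hT.add hS) measurableSet_closedBall,
    hTS.map_add_eq_map_conv_map hT hS]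
  simpa using Measure.conv_apply_le_of_forall_preimage_add_le (P.map T) (P.map S)
    measurableSet_closedBall fun x => by
      rw [preimage_add_left_closedBall, Measure.map_apply hS measurableSet_closedBall]
      exact h _

lemma ENNReal.one_div_three_eq_one_sub_two_div_three : (1 : ℝ≥0∞) / 3 = 1 - 2 / 3 := by
  refine (ENNReal.sub_eq_of_eq_add (ENNReal.div_ne_top (by norm_num) (by norm_num)) ?_).symm
  rw [ENNReal.div_add_div_same, eq_comm, ENNReal.div_eq_one_iff] <;> norm_num

theorem sums_iid_comparison_second_case_general
    {Ω : Type*} [MeasurableSpace Ω] {P : Measure Ω} [IsProbabilityMeasure P]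
    {E : Type*} [NormedAddCommGroup E]
    [MeasurableSpace E] [BorelSpace E] [SecondCountableTopology E]
    (X : ℕ → Ω → E) (hmeas : ∀ i, Measurable (X i))
    (hindep : iIndepFun X P)
    {k : ℕ} {t : ℝ}
    (hcase : ∃ i, 1 ≤ i ∧ i ≤ k ∧ ∀ x : E,
      P {ω | ‖(∑ l ∈ Finset.range i, X l ω) - x‖ ≤ t / 10} ≤ (2 : ℝ≥0∞) / 3) :
    (1 : ℝ≥0∞) / 3 ≤ P {ω | t / 10 < ‖∑ i ∈ Finset.range k, X i ω‖} := by
  obtain ⟨i, -, hik, hS⟩ := hcase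
  have hsplit : ∑ l ∈ Finset.range k, X l =
      ∑ l ∈ Finset.Ico i k, X l + ∑ l ∈ Finset.range i, X l := by
    rw [add_comm, Finset.sum_range_add_sum_Ico _ hik]
  have hdisj : Disjoint (Finset.Ico i k) (Finset.range i) := by
    rw [Finset.range_eq_Ico]
    exact Finset.Ico_disjoint_Ico_consecutive 0 i k |>.symm
  have hsum_meas (s : Finset ℕ) : Measurable (∑ l ∈ s, X l) := by
    rw [Finset.sum_fn]
    exact Finset.measurable_fun_sum s fun l _ => hmeas l
  have hball : P ((∑ l ∈ Finset.range k, X l) ⁻¹' closedBall 0 (t / 10)) ≤ 2 / 3 := by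
    rw [hsplit]
    refine (hindep.indepFun_finsetSum_finsetSum_s11 hmeas hdisj).measure_add_preimage_closedBall_le
      (hsum_meas _) (hsum_meas _) (fun x => ?_) 0
    simpa [Set.preimage, dist_eq_norm, Finset.sum_apply] using hS x
  have hcompl : {ω | t / 10 < ‖∑ i ∈ Finset.range k, X i ω‖}
      = ((∑ l ∈ Finset.range k, X l) ⁻¹' closedBall 0 (t / 10))ᶜ := by
    ext ω
    simp [Finset.sum_apply]
  rw [hcompl, prob_compl_eq_one_sub (measurableSet_closedBall.preimage (hsum_meas _)),
    ENNReal.one_div_three_eq_one_sub_two_div_three]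
  exact tsub_le_tsub_left hball 1

/-- Second case in the proof of Theorem 1: for i.i.d. Banach-space valued random variables
with partial sums `S_i`, if some `S_i` with `1 ≤ i ≤ k` has no `(t/10)`-concentration
point, then `P(‖S_k‖ > t/10) ≥ 1/3`. -/
theorem sums_iid_comparison_second_case
    {Ω : Type*} [MeasurableSpace Ω] {P : Measure Ω} [IsProbabilityMeasure P]
    {E : Type*} [NormedAddCommGroup E] [NormedSpace ℝ E] [CompleteSpace E]
    [MeasurableSpace E] [BorelSpace E] [SecondCountableTopology E]
    (X : ℕ → Ω → E) (hmeas : ∀ i, Measurable (X i))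
    (hindep : iIndepFun X P)
    (hident : ∀ i, IdentDistrib (X i) (X 0) P P)
    {k : ℕ} (hk : 1 ≤ k) {t : ℝ} (ht : 0 < t)
    (hcase : ∃ i, 1 ≤ i ∧ i ≤ k ∧ ∀ x : E,
      P {ω | ‖(∑ l ∈ Finset.range i, X l ω) - x‖ ≤ t / 10} ≤ (2 : ℝ≥0∞) / 3) :
    (1 : ℝ≥0∞) / 3 ≤ P {ω | t / 10 < ‖∑ i ∈ Finset.range k, X i ω‖} :=
  sums_iid_comparison_second_case_general X hmeas hindep hcase
end

section
/- There is no universal constant for the weighted analogue of Theorem 1: for every constant $c > 0$ there exist real-valued independent identically distributed random variables $X_1, X_2, \dots$, positive weights $\alpha_1, \alpha_2, \dots > 0$, integers $1 \le j \le k$, and $t > 0$ such that, with $S_k = \sum_{i=1}^k \alpha_i X_i$, one has $\Pr(|S_j| > t) > c\, \Pr(|S_k| > t/c)$. -/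
/-!
Take i.i.d. variables equal to `4n - 2` with probability `1/n` and to `-2` otherwise: they have
mean `2`, variance `16 (n - 1)`, and `|X i| ≥ 2`, so `P(|S₁| > 1) = 1`. Give `X 0` weight `1` and
`X 1, …, X n²` weight `1/n²`. On the event `X 0 = -2`, of probability `1 - 1/n`, the sum
`S_{n²+1}` is the deviation of the sample mean of `n²` variables from its expectation, which by
Chebyshev exceeds `1/c` with probability at most `16 c² / n`. Hence
`c P(|S_{n²+1}| > 1/c) ≤ c (1 + 16 c²) / n < 1` as soon as `n > c (1 + 16 c²)`.
-/

open MeasureTheory ProbabilityTheory Finset unitInterval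
open scoped ENNReal

noncomputable def headWeight (N i : ℕ) : ℝ := if i = 0 then 1 else (N : ℝ)⁻¹

lemma headWeight_pos {N : ℕ} (hN : 0 < N) (i : ℕ) : 0 < headWeight N i := by
  unfold headWeight; split_ifs <;> positivity

lemma sum_range_succ_headWeight_mul (N : ℕ) (x : ℕ → ℝ) :
    ∑ i ∈ range (N + 1), headWeight N i * x i = x 0 + (N : ℝ)⁻¹ * ∑ i ∈ range N, x (i + 1) := by
  simp [sum_range_succ', headWeight, mul_sum, add_comm]

section IndependentSums

variable {Ω : Type*} {mΩ : MeasurableSpace Ω} {P : Measure Ω} [IsFiniteMeasure P] {μ : Measure ℝ}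

theorem measure_le_abs_sum_sub_le_of_hasLaw {ι : Type*} {X : ι → Ω → ℝ}
    (hindep : Pairwise fun i j ↦ X i ⟂ᵢ[P] X j) (hlaw : ∀ i, HasLaw (X i) μ P)
    (hμ : MemLp id 2 μ) (s : Finset ι) {ε : ℝ} (hε : 0 < ε) :
    P {ω | ε ≤ |∑ i ∈ s, X i ω - #s * ∫ x, x ∂μ|} ≤ ENNReal.ofReal (#s * Var[id; μ] / ε ^ 2) := by
  have hX (i : ι) : MemLp (X i) 2 P := ((hlaw i).identDistrib HasLaw.id).memLp_iff.2 hμ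
  have hmean : ∫ ω, ∑ i ∈ s, X i ω ∂P = #s * ∫ x, x ∂μ := by
    simp [integral_finsetSum s fun i _ ↦ (hX i).integrable one_le_two, (hlaw _).integral_eq]
  have hvar : Var[∑ i ∈ s, X i; P] = #s * Var[id; μ] := by
    simp [IndepFun.variance_sum (fun i _ ↦ hX i) fun i _ j _ hij ↦ hindep hij,
      (hlaw _).variance_eq]
  have := meas_ge_le_variance_div_sq (memLp_finsetSum' s fun i _ ↦ hX i) hε
  simp only [Finset.sum_apply] at this
  rwa [hmean, hvar] at this

theorem measure_lt_abs_sum_headWeight_mul_le {X : ℕ → Ω → ℝ}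
    (hindep : Pairwise fun i j ↦ X i ⟂ᵢ[P] X j) (hlaw : ∀ i, HasLaw (X i) μ P)
    (hμ : MemLp id 2 μ) {N : ℕ} (hN : 0 < N) {ε : ℝ} (hε : 0 < ε) :
    P {ω | ε < |∑ i ∈ range (N + 1), headWeight N i * X i ω|}
      ≤ P {ω | X 0 ω ≠ -∫ x, x ∂μ} + ENNReal.ofReal (Var[id; μ] / (N * ε ^ 2)) := by
  set m := ∫ x, x ∂μ
  have hN' : (0 : ℝ) < N := by exact_mod_cast hN
  have hsub : {ω | ε < |∑ i ∈ range (N + 1), headWeight N i * X i ω|}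
      ⊆ {ω | X 0 ω ≠ -m} ∪ {ω | N * ε ≤ |∑ i ∈ range N, X (i + 1) ω - #(range N) * m|} := by
    intro ω hω
    by_cases h0 : X 0 ω = -m
    · right
      have hsum : ∑ i ∈ range (N + 1), headWeight N i * X i ω
          = (N : ℝ)⁻¹ * (∑ i ∈ range N, X (i + 1) ω - #(range N) * m) := by
        rw [sum_range_succ_headWeight_mul, h0, card_range]
        field_simp
        ring
      simp only [Set.mem_ofPred_eq, hsum, abs_mul, abs_inv, Nat.abs_cast] at hω ⊢
      exact ((lt_inv_mul_iff₀ hN').1 hω).le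
    · exact Or.inl h0
  have hcheb := measure_le_abs_sum_sub_le_of_hasLaw (X := fun i ↦ X (i + 1))
    (fun i j hij ↦ hindep (by simpa using hij)) (fun i ↦ hlaw (i + 1)) hμ (range N)
    (mul_pos hN' hε)
  calc _ ≤ _ := measure_mono hsub
    _ ≤ _ := measure_union_le _ _
    _ ≤ _ := by
      gcongr
      refine hcheb.trans (ENNReal.ofReal_le_ofReal (le_of_eq ?_))
      rw [card_range]
      field_simp

end IndependentSums

lemma memLp_id_bernoulliMeasure (x y : ℝ) (p : I) : MemLp id 2 Ber(x, y, p) :=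
  (memLp_two_iff_integrable_sq aestronglyMeasurable_id).2 (integrable_bernoulliMeasure x y p _)

lemma variance_id_bernoulliMeasure (x y : ℝ) (p : I) :
    Var[id; Ber(x, y, p)] = p * (1 - p) * (x - y) ^ 2 := by
  rw [variance_eq_sub (memLp_id_bernoulliMeasure x y p)]
  simp only [integral_bernoulliMeasure, Pi.pow_apply, id, smul_eq_mul]
  ring

lemma hasLaw_eval_infinitePi {ι 𝓧 : Type*} {m𝓧 : MeasurableSpace 𝓧} (μ : ι → Measure 𝓧)
    [∀ i, IsProbabilityMeasure (μ i)] (i : ι) :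
    HasLaw (fun ω : ι → 𝓧 ↦ ω i) (μ i) (Measure.infinitePi μ) :=
  (measurePreserving_eval_infinitePi μ i).hasLaw

lemma iIndepFun_eval_infinitePi {ι 𝓧 : Type*} {m𝓧 : MeasurableSpace 𝓧} (μ : ι → Measure 𝓧)
    [∀ i, IsProbabilityMeasure (μ i)] :
    iIndepFun (fun i (ω : ι → 𝓧) ↦ ω i) (Measure.infinitePi μ) :=
  iIndepFun_infinitePi (X := fun _ x ↦ x) fun _ ↦ measurable_id

noncomputable def spikeLaw (n : ℕ) : Measure ℝ :=
  Ber(4 * n - 2, -2, ⟨(n : ℝ)⁻¹, Set.mem_Icc.2 ⟨inv_nonneg.2 n.cast_nonneg, Nat.cast_inv_le_one n⟩⟩)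

section spikeLaw

variable {n : ℕ}

instance : IsProbabilityMeasure (spikeLaw n) := by
  unfold spikeLaw; infer_instance

lemma memLp_id_spikeLaw : MemLp id 2 (spikeLaw n) := memLp_id_bernoulliMeasure _ _ _

lemma integral_id_spikeLaw (hn : 0 < n) : ∫ x, x ∂spikeLaw n = 2 := by
  have : (n : ℝ) ≠ 0 := by positivity
  simp only [spikeLaw, integral_bernoulliMeasure, smul_eq_mul]
  field_simp
  ring

lemma variance_id_spikeLaw (hn : 0 < n) : Var[id; spikeLaw n] = 16 * (n - 1) := by
  have : (n : ℝ) ≠ 0 := by positivity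
  rw [spikeLaw, variance_id_bernoulliMeasure]
  field_simp
  ring

lemma spikeLaw_ne_neg_two (hn : 0 < n) : spikeLaw n {x | x ≠ -2} = ENNReal.ofReal (n : ℝ)⁻¹ := by
  have : (0 : ℝ) < n := by positivity
  rw [spikeLaw, bernoulliMeasure_apply_of_mem_of_notMem _
    (s := {x | x ≠ -2}) (measurableSet_singleton _).compl]
  · rw [← ENNReal.ofReal_coe_nnreal, coe_toNNReal]
  · simp only [Set.mem_ofPred_eq]; linarith
  · simp

lemma spikeLaw_one_lt_abs (hn : 0 < n) : spikeLaw n {x | 1 < |x|} = 1 := by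
  have : (1 : ℝ) ≤ n := by exact_mod_cast hn
  rw [spikeLaw, bernoulliMeasure_apply_of_mem_of_mem _
    (measurableSet_lt measurable_const measurable_abs)]
  · simp only [Set.mem_ofPred_eq]; rw [abs_of_pos (by linarith)]; linarith
  · norm_num

lemma infinitePi_spikeLaw_lt_abs_sum_headWeight_mul_le (hn : 0 < n) {ε : ℝ} (hε : 0 < ε) :
    Measure.infinitePi (fun _ ↦ spikeLaw n)
        {ω | ε < |∑ i ∈ range (n ^ 2 + 1), headWeight (n ^ 2) i * ω i|}
      ≤ ENNReal.ofReal ((n : ℝ)⁻¹ + 16 * (n - 1) / (n ^ 2 * ε ^ 2)) := by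
  have hn1 : (1 : ℝ) ≤ n := by exact_mod_cast hn
  have := measure_lt_abs_sum_headWeight_mul_le (μ := spikeLaw n)
    (fun i j hij ↦ (iIndepFun_eval_infinitePi _).indepFun hij) (hasLaw_eval_infinitePi _)
    memLp_id_spikeLaw (N := n ^ 2) (by positivity) hε
  rwa [integral_id_spikeLaw hn, variance_id_spikeLaw hn,
    (hasLaw_eval_infinitePi _ 0).measure_eq (p := (· ≠ -2)) (measurableSet_singleton _).compl,
    spikeLaw_ne_neg_two hn, Nat.cast_pow,
    ← ENNReal.ofReal_add (by positivity) (div_nonneg (by linarith) (by positivity))] at this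

lemma infinitePi_spikeLaw_one_lt_abs_eval_zero (hn : 0 < n) :
    Measure.infinitePi (fun _ ↦ spikeLaw n) {ω | 1 < |ω 0|} = 1 := by
  rw [(hasLaw_eval_infinitePi _ 0).measure_eq (p := fun x ↦ 1 < |x|)
    (measurableSet_lt measurable_const measurable_abs), spikeLaw_one_lt_abs hn]

end spikeLaw

/-- No universal constant works for the weighted analogue of Theorem 1: for every `c > 0`
there exist real-valued i.i.d. random variables `X_i`, positive weights `α_i`, indices
`1 ≤ j ≤ k` and `t > 0` such that, with `S_k = ∑_{i<k} α_i X_i`,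
`P(|S_j| > t) > c P(|S_k| > t/c)`. -/
theorem no_weighted_comparison :
    ∀ c : ℝ, 0 < c →
      ∃ (Ω : Type) (_ : MeasurableSpace Ω) (P : Measure Ω)
        (_ : IsProbabilityMeasure P) (X : ℕ → Ω → ℝ) (α : ℕ → ℝ) (j k : ℕ) (t : ℝ),
        (∀ i, Measurable (X i)) ∧
        iIndepFun X P ∧
        (∀ i, IdentDistrib (X i) (X 0) P P) ∧
        (∀ i, 0 < α i) ∧
        1 ≤ j ∧ j ≤ k ∧ 0 < t ∧
        ENNReal.ofReal c * P {ω | t / c < |∑ i ∈ Finset.range k, α i * X i ω|} <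
          P {ω | t < |∑ i ∈ Finset.range j, α i * X i ω|} := by
  intro c hc
  obtain ⟨n, hn⟩ := exists_nat_gt (c * (1 + 16 * c ^ 2))
  have hn0 : 0 < n := by exact_mod_cast (by positivity : 0 < c * (1 + 16 * c ^ 2)).trans hn
  have hn1 : (1 : ℝ) ≤ n := by exact_mod_cast hn0
  have hlaw := hasLaw_eval_infinitePi fun _ : ℕ ↦ spikeLaw n
  refine ⟨ℕ → ℝ, inferInstance, Measure.infinitePi fun _ ↦ spikeLaw n, inferInstance,
    fun i ω ↦ ω i, headWeight (n ^ 2), 1, n ^ 2 + 1, 1, measurable_pi_apply,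
    iIndepFun_eval_infinitePi _,
    fun i ↦ (hlaw i).identDistrib (hlaw 0),
    headWeight_pos (by positivity), le_rfl, by omega, one_pos, ?_⟩
  have hvar : 16 * (n - 1) / (n ^ 2 * (1 / c) ^ 2) ≤ 16 * c ^ 2 / n := by
    rw [div_le_div_iff₀ (by positivity) (by positivity)]
    field_simp
    nlinarith
  have hsmall : c * ((n : ℝ)⁻¹ + 16 * (n - 1) / (n ^ 2 * (1 / c) ^ 2)) < 1 :=
    calc _ ≤ c * ((n : ℝ)⁻¹ + 16 * c ^ 2 / n) := by gcongr
      _ = c * (1 + 16 * c ^ 2) / n := by ring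
      _ < 1 := (div_lt_one (by positivity)).2 hn
  calc _ ≤ ENNReal.ofReal c * ENNReal.ofReal ((n : ℝ)⁻¹ + 16 * (n - 1) / (n ^ 2 * (1 / c) ^ 2)) :=
        by gcongr; exact infinitePi_spikeLaw_lt_abs_sum_headWeight_mul_le hn0 (by positivity)
    _ < 1 := by rwa [← ENNReal.ofReal_mul hc.le, ENNReal.ofReal_lt_one]
    _ = _ := by simpa [headWeight] using (infinitePi_spikeLaw_one_lt_abs_eval_zero hn0).symm
end
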